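/- arXiv:2407.02025 — 8 statements merged into one kernel-verified Lean document; each statement's English description precedes it below -/
import Mathlib

section
/- Let d, n ≥ 1, let A be a simple graph on n vertices that is generically globally rigid in ℝ^d, and let X ∈ ℝ^{n×d} be generic. Let (Â, X̂) be any geometric graph in ℝ^d on m vertices. If the depth-1 global invariant geometric WL features agree, i.e. S^{(1)}(A,X) = S^{(1)}(Â,X̂) as multisets, then n = m and (A,X) and (Â,X̂) are geometrically isomorphic. (Positive direction of Theorem 3.1: a maximally expressive I-GGNN of depth T = 1 generically identifies every generically globally rigid graph.) -/
open scoped Classical BigOperators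
open MeasureTheory

noncomputable def vnorm {d : ℕ} (v : Fin d → ℝ) : ℝ := Real.sqrt (∑ i, v i ^ 2)

def IsGeneric {n d : ℕ} (X : Fin n → Fin d → ℝ) : Prop :=
  ∀ p : MvPolynomial (Fin n × Fin d) ℚ, p ≠ 0 →
    (MvPolynomial.aeval (fun q : Fin n × Fin d => X q.1 q.2)) p ≠ 0

def GeomIso {n m d : ℕ} (A : SimpleGraph (Fin n)) (X : Fin n → Fin d → ℝ)
    (B : SimpleGraph (Fin m)) (Y : Fin m → Fin d → ℝ) : Prop :=
  ∃ σ : Fin n ≃ Fin m, ∃ Q : Matrix (Fin d) (Fin d) ℝ,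
    Q ∈ Matrix.orthogonalGroup (Fin d) ℝ ∧ ∃ t : Fin d → ℝ,
    (∀ i j, B.Adj (σ i) (σ j) ↔ A.Adj i j) ∧
    (∀ i, Y (σ i) = Q.mulVec (X i) + t)

def IFeat : ℕ → Type
  | 0 => Unit
  | (t+1) => Multiset (IFeat t × ℝ)

noncomputable def iwl {n d : ℕ} (A : SimpleGraph (Fin n)) (X : Fin n → Fin d → ℝ) :
    (t : ℕ) → Fin n → IFeat t
  | 0 => fun _ => ()
  | (t+1) => fun i => (Finset.univ.filter (fun j => A.Adj i j)).val.map
      (fun j => (iwl A X t j, vnorm (fun l => X i l - X j l)))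

noncomputable def iwlGlobal {n d : ℕ} (A : SimpleGraph (Fin n)) (X : Fin n → Fin d → ℝ)
    (t : ℕ) : Multiset (IFeat t) := Finset.univ.val.map (iwl A X t)

def EFeat (d : ℕ) : ℕ → Type
  | 0 => Unit
  | (t+1) => Multiset (EFeat d t × (Fin d → ℝ))

noncomputable def ewl {n d : ℕ} (A : SimpleGraph (Fin n)) (X : Fin n → Fin d → ℝ) :
    (t : ℕ) → Fin n → EFeat d t
  | 0 => fun _ => ()
  | (t+1) => fun i => (Finset.univ.filter (fun j => A.Adj i j)).val.map
      (fun j => (ewl A X t j, fun l => X i l - X j l))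

noncomputable def actE {d : ℕ} (Q : Matrix (Fin d) (Fin d) ℝ) :
    (t : ℕ) → EFeat d t → EFeat d t
  | 0 => fun v => v
  | (t+1) => fun m => m.map (fun p => (actE Q t p.1, Q.mulVec p.2))

def eequiv {d : ℕ} (t : ℕ) (v w : EFeat d t) : Prop :=
  ∃ Q : Matrix (Fin d) (Fin d) ℝ, Q ∈ Matrix.orthogonalGroup (Fin d) ℝ ∧ actE Q t v = w

noncomputable def eglobal {n d : ℕ} (A : SimpleGraph (Fin n)) (X : Fin n → Fin d → ℝ)
    (t : ℕ) : Multiset (EFeat d t) := Finset.univ.val.map (ewl A X t)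

def eglobalEq {n m d : ℕ} (A : SimpleGraph (Fin n)) (X : Fin n → Fin d → ℝ)
    (B : SimpleGraph (Fin m)) (Y : Fin m → Fin d → ℝ) (t : ℕ) : Prop :=
  Multiset.Rel (eequiv t) (eglobal A X t) (eglobal B Y t)

/-- A geometric graph `(A, X)` is globally rigid in ℝ^d. -/
def GloballyRigid {n d : ℕ} (A : SimpleGraph (Fin n)) (X : Fin n → Fin d → ℝ) : Prop :=
  ∀ X' : Fin n → Fin d → ℝ,
    (∀ i j, A.Adj i j →
      vnorm (fun l => X' i l - X' j l) = vnorm (fun l => X i l - X j l)) →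
    ∃ Q : Matrix (Fin d) (Fin d) ℝ, Q ∈ Matrix.orthogonalGroup (Fin d) ℝ ∧
      ∃ t : Fin d → ℝ, ∀ i, X' i = Q.mulVec (X i) + t

/-- A combinatorial graph `A` is generically globally rigid in ℝ^d. -/
def GenericallyGloballyRigid {n : ℕ} (d : ℕ) (A : SimpleGraph (Fin n)) : Prop :=
  ∀ X : Fin n → Fin d → ℝ, IsGeneric X → GloballyRigid A X


/-! ### Auxiliary lemmas -/

section Aux

lemma exists_equiv_of_map_univ_eq {α β γ : Type*} [Fintype α] [Fintype β]
    (f : α → γ) (g : β → γ)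
    (h : Multiset.map f Finset.univ.val = Multiset.map g Finset.univ.val) :
    ∃ e : α ≃ β, ∀ x, g (e x) = f x := by
  classical
  have hcard : ∀ v : γ, Fintype.card (f ⁻¹' {v}) = Fintype.card (g ⁻¹' {v}) := by
    intro v
    have hc := congrArg (Multiset.count v) h
    rw [Multiset.count_map, Multiset.count_map] at hc
    simp only [Set.preimage, Set.mem_singleton_iff]
    rw [Fintype.card_subtype, Fintype.card_subtype]
    simpa [Finset.card, Finset.filter, eq_comm] using hc
  let u : ∀ v : γ, (f ⁻¹' {v}) ≃ (g ⁻¹' {v}) := fun v => Fintype.equivOfCardEq (hcard v)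
  refine ⟨(Equiv.sigmaFiberEquiv f).symm.trans ((Equiv.sigmaCongrRight u).trans
    (Equiv.sigmaFiberEquiv g)), fun x => ?_⟩
  simp only [Equiv.trans_apply, Equiv.sigmaCongrRight_apply, Equiv.sigmaFiberEquiv,
    Equiv.coe_fn_mk, Equiv.coe_fn_symm_mk, Sigma.map]
  exact (u (f x) ⟨x, rfl⟩).2

lemma poly_ne {n d : ℕ} (hd : 1 ≤ d) {i j k l v : Fin n}
    (hv : v = i ∨ v = j) (hvk : v ≠ k) (hvl : v ≠ l) (hij : i ≠ j) :
    (∑ c : Fin d, ((MvPolynomial.X (i,c) - MvPolynomial.X (j,c))^2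
      - (MvPolynomial.X (k,c) - MvPolynomial.X (l,c))^2) : MvPolynomial (Fin n × Fin d) ℚ) ≠ 0 := by
  intro h0
  have := congrArg (MvPolynomial.eval (fun q : Fin n × Fin d => if q.1 = v then (1:ℚ) else 0)) h0
  simp only [map_sum, map_sub, map_pow, MvPolynomial.eval_X, map_zero] at this
  have hterm : ∀ c : Fin d,
      ((if i = v then (1:ℚ) else 0) - (if j = v then 1 else 0))^2
      - ((if k = v then (1:ℚ) else 0) - (if l = v then 1 else 0))^2 = 1 := by
    intro c
    rcases hv with rfl | rfl
    · norm_num [Ne.symm hij, Ne.symm hvk, Ne.symm hvl]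
    · norm_num [hij, Ne.symm hvk, Ne.symm hvl]
  rw [Finset.sum_congr rfl (fun c _ => hterm c)] at this
  simp at this
  omega

lemma sqsum_ne {n d : ℕ} (hd : 1 ≤ d) {X : Fin n → Fin d → ℝ} (hX : IsGeneric X)
    {i j k l : Fin n} (hij : i ≠ j) (hkl : k ≠ l)
    (h1 : ¬(k = i ∧ l = j)) (h2 : ¬(k = j ∧ l = i)) :
    (∑ c, (X i c - X j c)^2) ≠ (∑ c, (X k c - X l c)^2) := by
  have hv : ∃ v, (v = i ∨ v = j) ∧ v ≠ k ∧ v ≠ l := by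
    by_cases hik : i = k
    · subst hik
      refine ⟨j, Or.inr rfl, ?_, ?_⟩ <;> rintro rfl
      · exact hij rfl
      · exact h1 ⟨rfl, rfl⟩
    · by_cases hil : i = l
      · subst hil
        refine ⟨j, Or.inr rfl, ?_, ?_⟩ <;> rintro rfl
        · exact h2 ⟨rfl, rfl⟩
        · exact hij rfl
      · exact ⟨i, Or.inl rfl, hik, hil⟩
  obtain ⟨v, hv, hvk, hvl⟩ := hv
  have hp := hX _ (poly_ne hd hv hvk hvl hij (d := d))
  intro heq
  apply hp
  simp only [map_sum, map_sub, map_pow, MvPolynomial.aeval_X]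
  rw [Finset.sum_sub_distrib]
  simpa using sub_eq_zero.mpr heq

lemma vnorm_ne {n d : ℕ} (hd : 1 ≤ d) {X : Fin n → Fin d → ℝ} (hX : IsGeneric X)
    {i j k l : Fin n} (hij : i ≠ j) (hkl : k ≠ l)
    (h1 : ¬(k = i ∧ l = j)) (h2 : ¬(k = j ∧ l = i)) :
    vnorm (fun c => X i c - X j c) ≠ vnorm (fun c => X k c - X l c) := by
  intro h
  apply sqsum_ne hd hX hij hkl h1 h2
  have h1' : (0:ℝ) ≤ ∑ c, (X i c - X j c)^2 := Finset.sum_nonneg fun c _ => sq_nonneg _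
  have h2' : (0:ℝ) ≤ ∑ c, (X k c - X l c)^2 := Finset.sum_nonneg fun c _ => sq_nonneg _
  have := congrArg (fun x => x^2) h
  simpa [vnorm, Real.sq_sqrt, h1', h2'] using this

lemma vnorm_symm {n d : ℕ} (X : Fin n → Fin d → ℝ) (i j : Fin n) :
    vnorm (fun c => X i c - X j c) = vnorm (fun c => X j c - X i c) := by
  unfold vnorm
  congr 1
  exact Finset.sum_congr rfl fun c _ => by ring

open Matrix in
lemma vnorm_mulVec {d : ℕ} {Q : Matrix (Fin d) (Fin d) ℝ}
    (hQ : Q ∈ Matrix.orthogonalGroup (Fin d) ℝ) (v : Fin d → ℝ) :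
    vnorm (Q.mulVec v) = vnorm v := by
  have h1 : Q.transpose * Q = 1 := by
    have := Matrix.mem_orthogonalGroup_iff' (Fin d) ℝ |>.mp hQ
    simpa [Matrix.star_eq_conjTranspose, Matrix.conjTranspose,
      Matrix.transpose] using this
  unfold vnorm
  congr 1
  have key : Q.mulVec v ⬝ᵥ Q.mulVec v = v ⬝ᵥ v := by
    rw [Matrix.dotProduct_mulVec]
    have h2 : Matrix.vecMul (Q.mulVec v) Q = v := by
      have : Q.mulVec v = Matrix.vecMul v Q.transpose := by
        rw [Matrix.vecMul_transpose]
      rw [this, Matrix.vecMul_vecMul, h1, Matrix.vecMul_one]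
    rw [h2]
  have e1 : ∀ w : Fin d → ℝ, ∑ i, w i ^ 2 = w ⬝ᵥ w := by
    intro w; simp [dotProduct, sq]
  rw [e1, e1, key]

/-- View a depth-1 invariant feature as a multiset. -/
def toM : IFeat 1 → Multiset (IFeat 0 × ℝ) := fun x => x

/-- The unique depth-0 feature. -/
def e0 : IFeat 0 := ()

lemma mem_iwl1 {n d : ℕ} (A : SimpleGraph (Fin n)) (X : Fin n → Fin d → ℝ)
    (i : Fin n) (v : ℝ) :
    ((e0, v) ∈ toM (iwl A X 1 i)) ↔
      ∃ j, A.Adj i j ∧ vnorm (fun c => X i c - X j c) = v := by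
  show (e0, v) ∈ Multiset.map (fun j => (iwl A X 0 j, vnorm (fun l => X i l - X j l)))
    (Finset.univ.filter (fun j => A.Adj i j)).val ↔ _
  simp [Prod.ext_iff, eq_comm, show ∀ j : Fin n, iwl A X 0 j = e0 from fun _ => rfl]

lemma count_iwl1 {n d : ℕ} (A : SimpleGraph (Fin n)) (X : Fin n → Fin d → ℝ)
    (i : Fin n) (v : ℝ) :
    Multiset.count (e0, v) (toM (iwl A X 1 i)) =
      (Finset.univ.filter
        (fun j => A.Adj i j ∧ vnorm (fun c => X i c - X j c) = v)).card := by
  show Multiset.count (e0, v) (Multiset.map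
      (fun j => (iwl A X 0 j, vnorm (fun l => X i l - X j l)))
      (Finset.univ.filter (fun j => A.Adj i j)).val) = _
  rw [Multiset.count_map]
  simp [Finset.card, Finset.filter_val, Multiset.filter_filter, Prod.ext_iff, eq_comm,
    and_comm, show ∀ j : Fin n, iwl A X 0 j = e0 from fun _ => rfl]

end Aux

/-- Positive direction of Theorem 3.1: a maximally expressive I-GGNN of depth 1
generically identifies every generically globally rigid graph. -/
theorem iggnn_identifies_generically_globally_rigid
    {d n m : ℕ} (hd : 1 ≤ d) (hn : 1 ≤ n)
    (A : SimpleGraph (Fin n)) (hA : GenericallyGloballyRigid d A)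
    (X : Fin n → Fin d → ℝ) (hX : IsGeneric X)
    (B : SimpleGraph (Fin m)) (Y : Fin m → Fin d → ℝ)
    (h : iwlGlobal A X 1 = iwlGlobal B Y 1) :
    n = m ∧ GeomIso A X B Y := by
  classical
  have hnm : n = m := by
    have := congrArg Multiset.card h
    simpa [iwlGlobal] using this
  obtain ⟨σ, hσ⟩ : ∃ e : Fin n ≃ Fin m, ∀ x, iwl B Y 1 (e x) = iwl A X 1 x :=
    exists_equiv_of_map_univ_eq (iwl A X 1) (iwl B Y 1) h
  -- Step A: edges of A are matched by σ with equal lengths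
  have haB : ∀ i j : Fin n, A.Adj i j → B.Adj (σ i) (σ j) ∧
      vnorm (fun c => Y (σ i) c - Y (σ j) c) = vnorm (fun c => X i c - X j c) := by
    intro i j hadj
    have hij : i ≠ j := hadj.ne
    set v : ℝ := vnorm (fun c => X i c - X j c) with hv
    have hmemA : (e0, v) ∈ toM (iwl A X 1 i) := (mem_iwl1 A X i v).mpr ⟨j, hadj, rfl⟩
    have hmemB : (e0, v) ∈ toM (iwl B Y 1 (σ i)) := by rw [hσ i]; exact hmemA
    obtain ⟨a, ha1, ha2⟩ := (mem_iwl1 B Y (σ i) v).mp hmemB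
    by_cases haj : a = σ j
    · subst haj; exact ⟨ha1, ha2⟩
    exfalso
    have cA : ∀ k, Multiset.count (e0, v) (toM (iwl A X 1 k)) =
        if k = i ∨ k = j then 1 else 0 := by
      intro k
      rw [count_iwl1]
      by_cases hk : k = i ∨ k = j
      · rw [if_pos hk]
        rcases hk with rfl | rfl
        · have hset : Finset.univ.filter
              (fun l => A.Adj k l ∧ vnorm (fun c => X k c - X l c) = v) = {j} := by
            ext l
            simp only [Finset.mem_filter, Finset.mem_univ, true_and, Finset.mem_singleton]
            constructor
            · rintro ⟨hadj', heq⟩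
              by_contra hne
              exact vnorm_ne hd hX hadj'.ne hij
                (fun hp => hne hp.2.symm) (fun hp => hij hp.2.symm) heq
            · rintro rfl; exact ⟨hadj, rfl⟩
          rw [hset, Finset.card_singleton]
        · have hset : Finset.univ.filter
              (fun l => A.Adj k l ∧ vnorm (fun c => X k c - X l c) = v) = {i} := by
            ext l
            simp only [Finset.mem_filter, Finset.mem_univ, true_and, Finset.mem_singleton]
            constructor
            · rintro ⟨hadj', heq⟩
              by_contra hne
              exact vnorm_ne hd hX hadj'.ne hij
                (fun hp => hij hp.1) (fun hp => hne hp.1.symm) heq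
            · rintro rfl
              exact ⟨hadj.symm, (vnorm_symm X k l).trans hv.symm⟩
          rw [hset, Finset.card_singleton]
      · push_neg at hk
        rw [if_neg (by push_neg; exact hk)]
        rw [Finset.card_eq_zero, Finset.filter_eq_empty_iff]
        rintro l - ⟨hadj', heq⟩
        exact vnorm_ne hd hX hadj'.ne hij
          (fun hp => hk.1 hp.1.symm) (fun hp => hk.2 hp.2.symm) heq
    have hsumA : ∑ k : Fin n, Multiset.count (e0, v) (toM (iwl A X 1 k)) = 2 := by
      simp only [cA]
      rw [← Finset.card_filter]
      have hset : Finset.univ.filter (fun k : Fin n => k = i ∨ k = j) = {i, j} := by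
        ext k; simp
      rw [hset, Finset.card_pair hij]
    have hsumB : ∑ b : Fin m, Multiset.count (e0, v) (toM (iwl B Y 1 b)) = 2 := by
      rw [← Equiv.sum_comp σ (fun b => Multiset.count (e0, v) (toM (iwl B Y 1 b)))]
      simp only [hσ]
      exact hsumA
    have hσij : σ i ≠ σ j := fun he => hij (σ.injective he)
    have hia : σ i ≠ a := ha1.ne
    have hja : σ j ≠ a := fun he => haj he.symm
    have h3 : 3 ≤ ∑ b : Fin m, Multiset.count (e0, v) (toM (iwl B Y 1 b)) := by
      have hmj : (e0, v) ∈ toM (iwl B Y 1 (σ j)) := by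
        rw [hσ j]
        exact (mem_iwl1 A X j v).mpr ⟨i, hadj.symm, (vnorm_symm X j i).trans hv.symm⟩
      have hma : (e0, v) ∈ toM (iwl B Y 1 a) :=
        (mem_iwl1 B Y a v).mpr ⟨σ i, ha1.symm, (vnorm_symm Y a (σ i)).trans ha2⟩
      have hle : ∑ b ∈ ({σ i, σ j, a} : Finset (Fin m)),
          Multiset.count (e0, v) (toM (iwl B Y 1 b)) ≤
          ∑ b : Fin m, Multiset.count (e0, v) (toM (iwl B Y 1 b)) :=
        Finset.sum_le_sum_of_subset (Finset.subset_univ _)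
      have hni : σ i ∉ ({σ j, a} : Finset (Fin m)) := by simp [hσij, hia]
      have hnj : σ j ∉ ({a} : Finset (Fin m)) := by simp [hja]
      rw [Finset.sum_insert hni, Finset.sum_insert hnj, Finset.sum_singleton] at hle
      have c1 : 1 ≤ Multiset.count (e0, v) (toM (iwl B Y 1 (σ i))) :=
        Multiset.one_le_count_iff_mem.mpr hmemB
      have c2 : 1 ≤ Multiset.count (e0, v) (toM (iwl B Y 1 (σ j))) :=
        Multiset.one_le_count_iff_mem.mpr hmj
      have c3 : 1 ≤ Multiset.count (e0, v) (toM (iwl B Y 1 a)) :=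
        Multiset.one_le_count_iff_mem.mpr hma
      omega
    omega
  -- Apply global rigidity to X' := Y ∘ σ
  obtain ⟨Q, hQ, t, ht⟩ := hA X hX (fun i => Y (σ i))
    (fun i j hadj => (haB i j hadj).2)
  -- lengths in Y along σ equal lengths in X
  have hlen : ∀ i j : Fin n,
      (fun c => Y (σ i) c - Y (σ j) c) = Q.mulVec (X i - X j) := by
    intro i j
    funext c
    rw [show Y (σ i) c = (Q.mulVec (X i) + t) c from congrFun (ht i) c,
      show Y (σ j) c = (Q.mulVec (X j) + t) c from congrFun (ht j) c,
      Matrix.mulVec_sub]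
    simp
  -- Converse adjacency
  have hBA : ∀ i j : Fin n, B.Adj (σ i) (σ j) → A.Adj i j := by
    intro i j hB
    have hij : i ≠ j := fun he => hB.ne (by rw [he])
    have hmem : (e0, vnorm (fun c => Y (σ i) c - Y (σ j) c)) ∈ toM (iwl A X 1 i) := by
      rw [← hσ i]
      exact (mem_iwl1 B Y (σ i) _).mpr ⟨σ j, hB, rfl⟩
    obtain ⟨k, hk1, hk2⟩ := (mem_iwl1 A X i _).mp hmem
    have hr : vnorm (fun c => Y (σ i) c - Y (σ j) c) = vnorm (fun c => X i c - X j c) := by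
      rw [hlen i j, vnorm_mulVec hQ]
      rfl
    rw [hr] at hk2
    by_cases hkj : k = j
    · subst hkj; exact hk1
    · exact absurd hk2 (vnorm_ne hd hX hk1.ne hij
        (fun hp => hkj hp.2.symm) (fun hp => hk1.ne hp.1))
  exact ⟨hnm, σ, Q, hQ, t,
    fun i j => ⟨hBA i j, fun h' => (haB i j h').1⟩, ht⟩
end

section
/- Let d ≥ 1, let A be a connected simple graph on n vertices, let X ∈ ℝ^{n×d} be generic, and let (Â, X̂) be any geometric graph in ℝ^d on m vertices. If the depth-(d+1) global equivariant geometric WL features agree, i.e. V^{(d+1)}(A,X) = V^{(d+1)}(Â,X̂) as multisets of O(d)-orbits, then n = m and (A,X) and (Â,X̂) are geometrically isomorphic. (Positive direction of Theorem 4.1: a maximally expressive E-GGNN of depth d+1 generically identifies every connected graph.) -/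
open scoped Classical BigOperators
open MeasureTheory

namespace EGG

variable {n m d : ℕ}

def IsMatch (A : SimpleGraph (Fin n)) (X : Fin n → Fin d → ℝ)
    (B : SimpleGraph (Fin m)) (Y : Fin m → Fin d → ℝ)
    (Q : Matrix (Fin d) (Fin d) ℝ) (t : ℕ) (i : Fin n) (i' : Fin m) : Prop :=
  actE Q t (ewl A X t i) = ewl B Y t i'

noncomputable def trunc {d : ℕ} : (t : ℕ) → EFeat d (t+1) → EFeat d t
  | 0, _ => ()
  | (t+1), s => s.map (fun p => (trunc t p.1, p.2))

lemma trunc_ewl (A : SimpleGraph (Fin n)) (X : Fin n → Fin d → ℝ) :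
    ∀ (t : ℕ) (i : Fin n), trunc t (ewl A X (t+1) i) = ewl A X t i := by
  intro t
  induction t with
  | zero => intro i; rfl
  | succ t ih =>
      intro i
      simp only [ewl, trunc, Multiset.map_map]
      refine Multiset.map_congr rfl ?_
      intro j hj
      simp only [Function.comp_apply]
      rw [← ih j]
      rfl

lemma trunc_actE {d : ℕ} (Q : Matrix (Fin d) (Fin d) ℝ) :
    ∀ (t : ℕ) (v : EFeat d (t+1)), trunc t (actE Q (t+1) v) = actE Q t (trunc t v) := by
  intro t
  induction t with
  | zero => intro v; rfl
  | succ t ih =>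
      intro v
      simp only [actE, trunc, Multiset.map_map]
      erw [Multiset.map_map, Multiset.map_map]
      refine Multiset.map_congr rfl ?_
      intro p hp
      simp only [Function.comp_apply]
      rw [← ih p.1]
      rfl

lemma IsMatch.succ {A : SimpleGraph (Fin n)} {X : Fin n → Fin d → ℝ}
    {B : SimpleGraph (Fin m)} {Y : Fin m → Fin d → ℝ} {Q : Matrix (Fin d) (Fin d) ℝ}
    {t : ℕ} {i : Fin n} {i' : Fin m}
    (h : IsMatch A X B Y Q (t+1) i i') : IsMatch A X B Y Q t i i' := by
  unfold IsMatch at h ⊢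
  have h2 := congrArg (trunc t) h
  rwa [trunc_actE, trunc_ewl, trunc_ewl] at h2

lemma IsMatch.mono {A : SimpleGraph (Fin n)} {X : Fin n → Fin d → ℝ}
    {B : SimpleGraph (Fin m)} {Y : Fin m → Fin d → ℝ} {Q : Matrix (Fin d) (Fin d) ℝ}
    {t s : ℕ} {i : Fin n} {i' : Fin m}
    (h : IsMatch A X B Y Q t i i') (hs : s ≤ t) : IsMatch A X B Y Q s i i' := by
  obtain ⟨k, rfl⟩ := Nat.exists_eq_add_of_le hs
  clear hs
  induction k with
  | zero => exact h
  | succ k ih => exact ih (by simpa [Nat.add_succ] using h.succ)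

lemma step_forward {A : SimpleGraph (Fin n)} {X : Fin n → Fin d → ℝ}
    {B : SimpleGraph (Fin m)} {Y : Fin m → Fin d → ℝ} {Q : Matrix (Fin d) (Fin d) ℝ}
    {t : ℕ} {i j : Fin n} {i' : Fin m}
    (h : IsMatch A X B Y Q (t+1) i i') (hj : A.Adj i j) :
    ∃ j' : Fin m, B.Adj i' j' ∧ IsMatch A X B Y Q t j j' ∧
      Y j' = Y i' - Q.mulVec (X i - X j) := by
  unfold IsMatch at h
  simp only [ewl, actE, Multiset.map_map, Function.comp] at h
  have h1 : ((actE Q t (ewl A X t j), Q.mulVec (fun l => X i l - X j l)) :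
      EFeat d t × (Fin d → ℝ)) ∈ Multiset.map
        (fun j => (actE Q t (ewl A X t j), Q.mulVec (fun l => X i l - X j l)))
        (Finset.univ.filter (fun k => A.Adj i k)).val :=
    Multiset.mem_map_of_mem _ (by simpa using hj)
  rw [h] at h1
  obtain ⟨j', hj', heq⟩ := Multiset.mem_map.1 h1
  have hadj : B.Adj i' j' := by simpa using hj'
  rw [Prod.mk.injEq] at heq
  refine ⟨j', hadj, heq.1.symm, ?_⟩
  funext l
  have h2 := congrFun heq.2 l
  have h3 : (fun l => X i l - X j l) = X i - X j := rfl
  rw [h3] at h2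
  simp only [Pi.sub_apply]
  linarith

lemma step_backward {A : SimpleGraph (Fin n)} {X : Fin n → Fin d → ℝ}
    {B : SimpleGraph (Fin m)} {Y : Fin m → Fin d → ℝ} {Q : Matrix (Fin d) (Fin d) ℝ}
    {t : ℕ} {i : Fin n} {i' j' : Fin m}
    (h : IsMatch A X B Y Q (t+1) i i') (hj : B.Adj i' j') :
    ∃ j : Fin n, A.Adj i j ∧ IsMatch A X B Y Q t j j' ∧
      Y j' = Y i' - Q.mulVec (X i - X j) := by
  unfold IsMatch at h
  simp only [ewl, actE, Multiset.map_map, Function.comp] at h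
  have h1 : ((ewl B Y t j', fun l => Y i' l - Y j' l) : EFeat d t × (Fin d → ℝ)) ∈
      Multiset.map (fun j' => (ewl B Y t j', fun l => Y i' l - Y j' l))
        (Finset.univ.filter (fun k => B.Adj i' k)).val :=
    Multiset.mem_map_of_mem _ (by simpa using hj)
  rw [← h] at h1
  obtain ⟨j, hjmem, heq⟩ := Multiset.mem_map.1 h1
  have hadj : A.Adj i j := by simpa using hjmem
  rw [Prod.mk.injEq] at heq
  refine ⟨j, hadj, heq.1, ?_⟩
  funext l
  have h2 := congrFun heq.2 l
  have h3 : (fun l => X i l - X j l) = X i - X j := rfl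
  rw [h3] at h2
  simp only [Pi.sub_apply]
  linarith

end EGG
namespace EGG

variable {n m d : ℕ}

lemma walk_forward {A : SimpleGraph (Fin n)} {X : Fin n → Fin d → ℝ}
    {B : SimpleGraph (Fin m)} {Y : Fin m → Fin d → ℝ} {Q : Matrix (Fin d) (Fin d) ℝ}
    {c : Fin d → ℝ} :
    ∀ {i u : Fin n} (w : A.Walk i u) {t : ℕ} {i' : Fin m},
      IsMatch A X B Y Q t i i' → Y i' = Q.mulVec (X i) + c → w.length ≤ t →
      ∃ (u' : Fin m) (w' : B.Walk i' u'), w'.length = w.length ∧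
        IsMatch A X B Y Q (t - w.length) u u' ∧ Y u' = Q.mulVec (X u) + c := by
  intro i u w
  induction w with
  | nil =>
      intro t i' hM hpos _
      exact ⟨i', SimpleGraph.Walk.nil, rfl, by simpa using hM, hpos⟩
  | @cons a b u hab p ih =>
      intro t i' hM hpos hlen
      simp only [SimpleGraph.Walk.length_cons] at hlen
      obtain ⟨t', rfl⟩ : ∃ t', t = t' + 1 := ⟨t - 1, by omega⟩
      obtain ⟨b', hb'adj, hMb, hYb⟩ := step_forward hM hab
      have hposb : Y b' = Q.mulVec (X b) + c := by
        rw [hYb, hpos, Matrix.mulVec_sub]; abel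
      obtain ⟨u', w', hw'len, hMu, hYu⟩ := ih hMb hposb (by omega)
      refine ⟨u', SimpleGraph.Walk.cons hb'adj w', ?_, ?_, hYu⟩
      · simp [hw'len]
      · simpa [Nat.succ_sub_succ] using hMu

lemma walk_backward {A : SimpleGraph (Fin n)} {X : Fin n → Fin d → ℝ}
    {B : SimpleGraph (Fin m)} {Y : Fin m → Fin d → ℝ} {Q : Matrix (Fin d) (Fin d) ℝ}
    {c : Fin d → ℝ} :
    ∀ {i' u' : Fin m} (w' : B.Walk i' u') {t : ℕ} {i : Fin n},
      IsMatch A X B Y Q t i i' → Y i' = Q.mulVec (X i) + c → w'.length ≤ t →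
      ∃ (u : Fin n) (w : A.Walk i u), w.length = w'.length ∧
        IsMatch A X B Y Q (t - w'.length) u u' ∧ Y u' = Q.mulVec (X u) + c := by
  intro i' u' w'
  induction w' with
  | nil =>
      intro t i hM hpos _
      exact ⟨i, SimpleGraph.Walk.nil, rfl, by simpa using hM, hpos⟩
  | @cons a' b' u' hab p ih =>
      intro t i hM hpos hlen
      simp only [SimpleGraph.Walk.length_cons] at hlen
      obtain ⟨t', rfl⟩ : ∃ t', t = t' + 1 := ⟨t - 1, by omega⟩
      obtain ⟨b, hbadj, hMb, hYb⟩ := step_backward hM hab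
      have hposb : Y b' = Q.mulVec (X b) + c := by
        rw [hYb, hpos, Matrix.mulVec_sub]; abel
      obtain ⟨u, w, hwlen, hMu, hYu⟩ := ih hMb hposb (by omega)
      refine ⟨u, SimpleGraph.Walk.cons hbadj w, ?_, ?_, hYu⟩
      · simp [hwlen]
      · simpa [Nat.succ_sub_succ] using hMu

noncomputable def ballG {N : ℕ} (G : SimpleGraph (Fin N)) (t : ℕ) (i : Fin N) :
    Finset (Fin N) :=
  Finset.univ.filter (fun u => ∃ w : G.Walk i u, w.length ≤ t)

lemma mem_ballG {N : ℕ} {G : SimpleGraph (Fin N)} {t : ℕ} {i u : Fin N} :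
    u ∈ ballG G t i ↔ ∃ w : G.Walk i u, w.length ≤ t := by
  simp [ballG]

lemma self_mem_ballG {N : ℕ} {G : SimpleGraph (Fin N)} {t : ℕ} {i : Fin N} :
    i ∈ ballG G t i :=
  mem_ballG.2 ⟨SimpleGraph.Walk.nil, by simp⟩

lemma ballG_mono {N : ℕ} {G : SimpleGraph (Fin N)} {t t' : ℕ} {i : Fin N} (h : t ≤ t') :
    ballG G t i ⊆ ballG G t' i := by
  intro u hu
  obtain ⟨w, hw⟩ := mem_ballG.1 hu
  exact mem_ballG.2 ⟨w, hw.trans h⟩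

lemma adj_mem_ballG {N : ℕ} {G : SimpleGraph (Fin N)} {t : ℕ} {i u v : Fin N}
    (hu : u ∈ ballG G t i) (h : G.Adj u v) : v ∈ ballG G (t+1) i := by
  obtain ⟨w, hw⟩ := mem_ballG.1 hu
  exact mem_ballG.2 ⟨w.concat h, by rw [SimpleGraph.Walk.length_concat]; omega⟩

lemma exists_boundary {N : ℕ} {G : SimpleGraph (Fin N)} (S : Finset (Fin N)) :
    ∀ {a b : Fin N}, G.Walk a b → a ∈ S → b ∉ S →
      ∃ u v, G.Adj u v ∧ u ∈ S ∧ v ∉ S := by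
  intro a b w
  induction w with
  | nil => intro ha hb; exact absurd ha hb
  | @cons a x b h p ih =>
      intro ha hb
      by_cases hx : x ∈ S
      · exact ih hx hb
      · exact ⟨a, x, h, ha, hx⟩

lemma ballG_card {N : ℕ} {G : SimpleGraph (Fin N)} {i : Fin N}
    (hpre : ∀ v, G.Reachable i v) : ∀ t, min (t+1) N ≤ (ballG G t i).card := by
  intro t
  induction t with
  | zero =>
      have h1 : 1 ≤ (ballG G 0 i).card := Finset.card_pos.2 ⟨i, self_mem_ballG⟩
      exact le_trans (min_le_left _ _) h1
  | succ t ih =>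
      by_cases hball : ballG G t i = Finset.univ
      · have h1 : Finset.univ ⊆ ballG G (t+1) i := by
          rw [← hball]; exact ballG_mono (Nat.le_succ t)
        have h2 := Finset.card_le_card h1
        simp only [Finset.card_univ, Fintype.card_fin] at h2
        exact le_trans (min_le_right _ _) h2
      · have hy : ∃ y, y ∉ ballG G t i := by
          by_contra hcon
          push_neg at hcon
          exact hball (Finset.eq_univ_iff_forall.2 hcon)
        obtain ⟨y, hy⟩ := hy
        obtain ⟨w⟩ := hpre y
        obtain ⟨u, v, huv, hu, hv⟩ := exists_boundary (ballG G t i) w self_mem_ballG hy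
        have hins : insert v (ballG G t i) ⊆ ballG G (t+1) i := by
          refine Finset.insert_subset (adj_mem_ballG hu huv) (ballG_mono (Nat.le_succ t))
        have h2 := Finset.card_le_card hins
        rw [Finset.card_insert_of_notMem hv] at h2
        have h3 : min (t+2) N ≤ min (t+1) N + 1 := by
          rw [Nat.min_def, Nat.min_def]; split_ifs <;> omega
        omega

lemma ball_image_eq {A : SimpleGraph (Fin n)} {X : Fin n → Fin d → ℝ}
    {B : SimpleGraph (Fin m)} {Y : Fin m → Fin d → ℝ} {Q : Matrix (Fin d) (Fin d) ℝ}
    {c : Fin d → ℝ} {t : ℕ} {i : Fin n} {i' : Fin m}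
    (hM : IsMatch A X B Y Q t i i') (hc : Y i' = Q.mulVec (X i) + c) :
    Finset.image Y (ballG B t i') =
      Finset.image (fun u => Q.mulVec (X u) + c) (ballG A t i) := by
  ext z
  simp only [Finset.mem_image, mem_ballG]
  constructor
  · rintro ⟨u', ⟨w', hw'⟩, rfl⟩
    obtain ⟨u, w, hlen, _, hpos⟩ := walk_backward w' hM hc hw'
    exact ⟨u, ⟨w, by omega⟩, hpos.symm⟩
  · rintro ⟨u, ⟨w, hw⟩, rfl⟩
    obtain ⟨u', w', hlen, _, hpos⟩ := walk_forward w hM hc hw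
    exact ⟨u', ⟨w', by omega⟩, hpos⟩

end EGG
namespace EGG

open Matrix

variable {n m d : ℕ}

noncomputable def sqd {d : ℕ} (u v : Fin d → ℝ) : ℝ := ∑ l, (u l - v l)^2

lemma sqd_eq_dot {d : ℕ} (u v : Fin d → ℝ) :
    sqd u v = dotProduct (u - v) (u - v) := by
  simp [sqd, dotProduct, sq]

lemma sqd_comm {d : ℕ} (u v : Fin d → ℝ) : sqd u v = sqd v u := by
  unfold sqd; congr 1; funext l; ring

lemma mulVec_dot {d : ℕ} {Q : Matrix (Fin d) (Fin d) ℝ} (hQ : Qᵀ * Q = 1)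
    (w : Fin d → ℝ) :
    dotProduct (Q.mulVec w) (Q.mulVec w) = dotProduct w w := by
  rw [Matrix.dotProduct_mulVec, ← Matrix.vecMul_transpose, Matrix.vecMul_vecMul, hQ,
    Matrix.vecMul_one]

lemma mulVec_injO {d : ℕ} {Q : Matrix (Fin d) (Fin d) ℝ} (hQ : Qᵀ * Q = 1)
    {x y : Fin d → ℝ} (h : Q.mulVec x = Q.mulVec y) : x = y := by
  have h2 : Qᵀ.mulVec (Q.mulVec x) = Qᵀ.mulVec (Q.mulVec y) := by rw [h]
  rwa [Matrix.mulVec_mulVec, Matrix.mulVec_mulVec, hQ, Matrix.one_mulVec,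
    Matrix.one_mulVec] at h2

lemma sqd_affine {d : ℕ} {Q : Matrix (Fin d) (Fin d) ℝ} (hQ : Qᵀ * Q = 1)
    (e a b : Fin d → ℝ) :
    sqd (Q.mulVec a + e) (Q.mulVec b + e) = sqd a b := by
  rw [sqd_eq_dot, sqd_eq_dot]
  have h1 : (Q.mulVec a + e) - (Q.mulVec b + e) = Q.mulVec (a - b) := by
    rw [Matrix.mulVec_sub]; abel
  rw [h1, mulVec_dot hQ]

/-- 4^a + 4^b = 4^c + 4^e determines the pair of exponents, sorted case. -/
lemma pow4_sorted : ∀ a b c e : ℕ, b ≤ a → e ≤ c → 4^a + 4^b = 4^c + 4^e →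
    a = c ∧ b = e := by
  intro a b c e hba hec hsum
  have hac : a = c := by
    rcases lt_trichotomy a c with h | h | h
    · exfalso
      have h1 : 4*4^a ≤ 4^c := by
        have := Nat.pow_le_pow_right (show 1 ≤ 4 by norm_num) (show a+1 ≤ c by omega)
        rwa [pow_succ, mul_comm] at this
      have h2 : 4^b ≤ 4^a := Nat.pow_le_pow_right (by norm_num) hba
      have h4 : 1 ≤ 4^b := Nat.one_le_pow _ _ (by norm_num)
      have h5 : 1 ≤ 4^c := Nat.one_le_pow _ _ (by norm_num)
      have h6 : 1 ≤ 4^e := Nat.one_le_pow _ _ (by norm_num)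
      omega
    · exact h
    · exfalso
      have h1 : 4*4^c ≤ 4^a := by
        have := Nat.pow_le_pow_right (show 1 ≤ 4 by norm_num) (show c+1 ≤ a by omega)
        rwa [pow_succ, mul_comm] at this
      have h2 : 4^e ≤ 4^c := Nat.pow_le_pow_right (by norm_num) hec
      have h4 : 1 ≤ 4^e := Nat.one_le_pow _ _ (by norm_num)
      have h5 : 1 ≤ 4^a := Nat.one_le_pow _ _ (by norm_num)
      have h6 : 1 ≤ 4^b := Nat.one_le_pow _ _ (by norm_num)
      omega
  subst hac
  have hbe : (4:ℕ)^b = 4^e := by omega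
  exact ⟨rfl, Nat.pow_right_injective (by norm_num) hbe⟩

lemma pow4_pair {a b c e : ℕ} (h : 4^a + 4^b = 4^c + 4^e) :
    (a = c ∧ b = e) ∨ (a = e ∧ b = c) := by
  rcases le_total b a with hba | hab <;> rcases le_total e c with hec | hce
  · exact Or.inl (pow4_sorted a b c e hba hec h)
  · obtain ⟨h1, h2⟩ := pow4_sorted a b e c hba hce (by omega)
    exact Or.inr ⟨h1, h2⟩
  · obtain ⟨h1, h2⟩ := pow4_sorted b a c e hab hec (by omega)
    exact Or.inr ⟨h2, h1⟩
  · obtain ⟨h1, h2⟩ := pow4_sorted b a e c hab hce (by omega)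
    exact Or.inl ⟨h2, h1⟩

lemma pow4_rat {i j k l : ℕ} (hij : i ≠ j) (hkl : k ≠ l)
    (h : ((4:ℚ)^i - 4^j)^2 = ((4:ℚ)^k - 4^l)^2) :
    (i = k ∧ j = l) ∨ (i = l ∧ j = k) := by
  have hfac : (((4:ℚ)^i - 4^j) - ((4:ℚ)^k - 4^l)) * (((4:ℚ)^i - 4^j) + ((4:ℚ)^k - 4^l))
      = 0 := by nlinarith [h]
  rcases mul_eq_zero.1 hfac with h0 | h0
  · -- 4^i + 4^l = 4^k + 4^j
    have hnat : (4^i + 4^l : ℕ) = 4^k + 4^j := by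
      have : ((4^i + 4^l : ℕ) : ℚ) = ((4^k + 4^j : ℕ) : ℚ) := by push_cast; linarith
      exact_mod_cast this
    rcases pow4_pair hnat with ⟨h1, h2⟩ | ⟨h1, h2⟩
    · exact Or.inl ⟨h1, h2.symm⟩
    · exact absurd h1 hij
  · -- 4^i + 4^k = 4^j + 4^l
    have hnat : (4^i + 4^k : ℕ) = 4^j + 4^l := by
      have : ((4^i + 4^k : ℕ) : ℚ) = ((4^j + 4^l : ℕ) : ℚ) := by push_cast; linarith
      exact_mod_cast this
    rcases pow4_pair hnat with ⟨h1, h2⟩ | ⟨h1, h2⟩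
    · exact absurd h1 hij
    · exact Or.inr ⟨h1, h2.symm⟩

lemma generic_inj {X : Fin n → Fin d → ℝ} (hd : 1 ≤ d) (hX : IsGeneric X) :
    Function.Injective X := by
  intro i j hij
  by_contra hne
  set c0 : Fin d := ⟨0, hd⟩
  set p : MvPolynomial (Fin n × Fin d) ℚ :=
    MvPolynomial.X (i, c0) - MvPolynomial.X (j, c0) with hp
  have hpne : p ≠ 0 := by
    intro h0
    have h1 := congrArg (MvPolynomial.aeval (fun q : Fin n × Fin d =>
      if q.1 = i then (1:ℚ) else 0)) h0
    have hne' : j ≠ i := fun h => hne h.symm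
    simp [hp, hne'] at h1
  have h2 := hX p hpne
  apply h2
  simp only [hp, map_sub, MvPolynomial.aeval_X, hij]
  ring

lemma generic_sqd {X : Fin n → Fin d → ℝ} (hd : 1 ≤ d) (hX : IsGeneric X) :
    ∀ i j k l : Fin n, i ≠ j → k ≠ l → sqd (X i) (X j) = sqd (X k) (X l) →
      (i = k ∧ j = l) ∨ (i = l ∧ j = k) := by
  intro i j k l hij hkl hsq
  by_contra hcon
  push_neg at hcon
  set p : MvPolynomial (Fin n × Fin d) ℚ :=
    (∑ l' : Fin d, (MvPolynomial.X (i, l') - MvPolynomial.X (j, l'))^2) -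
    (∑ l' : Fin d, (MvPolynomial.X (k, l') - MvPolynomial.X (l, l'))^2) with hp
  set c0 : Fin d := ⟨0, hd⟩
  have hpne : p ≠ 0 := by
    intro h0
    have h1 := congrArg (MvPolynomial.aeval (fun q : Fin n × Fin d =>
      if q.2 = c0 then (4:ℚ)^(q.1 : ℕ) else 0)) h0
    simp only [hp, map_sub, map_sum, map_pow, MvPolynomial.aeval_X, map_zero] at h1
    have hsum : ∀ a b : Fin n, (∑ l' : Fin d,
        ((if l' = c0 then (4:ℚ)^(a:ℕ) else 0) - (if l' = c0 then (4:ℚ)^(b:ℕ) else 0))^2)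
        = ((4:ℚ)^(a:ℕ) - 4^(b:ℕ))^2 := by
      intro a b
      rw [Finset.sum_congr rfl (g := fun l' =>
        if l' = c0 then ((4:ℚ)^(a:ℕ) - 4^(b:ℕ))^2 else 0)
        (fun l' _ => by by_cases hcase : l' = c0 <;> simp [hcase])]
      simp
    rw [hsum, hsum] at h1
    have h2 : ((4:ℚ)^(i:ℕ) - 4^(j:ℕ))^2 = ((4:ℚ)^(k:ℕ) - 4^(l:ℕ))^2 := by linarith
    have hij' : (i:ℕ) ≠ (j:ℕ) := fun h => hij (Fin.ext h)
    have hkl' : (k:ℕ) ≠ (l:ℕ) := fun h => hkl (Fin.ext h)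
    rcases pow4_rat hij' hkl' h2 with ⟨h3, h4⟩ | ⟨h3, h4⟩
    · exact hcon.1 (Fin.ext h3) (Fin.ext h4) |>.elim
    · exact hcon.2 (Fin.ext h3) (Fin.ext h4) |>.elim
  have h2 := hX p hpne
  apply h2
  simp only [hp, map_sub, map_sum, map_pow, MvPolynomial.aeval_X]
  have : ∀ a b : Fin n, (∑ l' : Fin d, (X a l' - X b l')^2) = sqd (X a) (X b) := by
    intro a b; rfl
  rw [this, this, hsq]
  ring

lemma generic_span {X : Fin n → Fin d → ℝ} (hX : IsGeneric X) :
    ∀ u : Fin (d+1) → Fin n, Function.Injective u →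
      ∀ M : Matrix (Fin d) (Fin d) ℝ,
        (∀ k : Fin d, M.mulVec (X (u k.succ) - X (u 0)) = 0) → M = 0 := by
  intro u hu M hM
  set pM : Matrix (Fin d) (Fin d) (MvPolynomial (Fin n × Fin d) ℚ) :=
    Matrix.of (fun k l : Fin d => MvPolynomial.X (u k.succ, l) - MvPolynomial.X (u 0, l))
    with hpM
  have hpne : pM.det ≠ 0 := by
    intro h0
    have h1 := congrArg (MvPolynomial.aeval (fun q : Fin n × Fin d =>
      if q.1 = u q.2.succ then (1:ℚ) else 0)) h0
    rw [map_zero, AlgHom.map_det, AlgHom.mapMatrix_apply] at h1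
    have hmap : pM.map (MvPolynomial.aeval (fun q : Fin n × Fin d =>
        if q.1 = u q.2.succ then (1:ℚ) else 0)) = (1 : Matrix (Fin d) (Fin d) ℚ) := by
      ext k l
      simp only [hpM, Matrix.map_apply, Matrix.of_apply, map_sub, MvPolynomial.aeval_X]
      have h2 : ¬ (u 0 = u l.succ) := fun h => (Fin.succ_ne_zero l) (hu h).symm
      rw [if_neg h2]
      by_cases hkl : k = l
      · subst hkl; rw [if_pos rfl]; simp [Matrix.one_apply]
      · have h3 : ¬ (u k.succ = u l.succ) :=
          fun h => hkl (Fin.succ_injective _ (hu h))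
        rw [if_neg h3]; simp [Matrix.one_apply, hkl]
    rw [hmap] at h1
    simp at h1
  have hdet := hX pM.det hpne
  rw [AlgHom.map_det, AlgHom.mapMatrix_apply] at hdet
  set V : Matrix (Fin d) (Fin d) ℝ :=
    Matrix.of (fun k l : Fin d => X (u k.succ) l - X (u 0) l) with hV
  have hmapV : pM.map (MvPolynomial.aeval (fun q : Fin n × Fin d => X q.1 q.2)) = V := by
    ext k l
    simp [hpM, hV, Matrix.map_apply]
  rw [hmapV] at hdet
  -- now V.det ≠ 0 and M * Vᵀ = 0
  have hMV : M * Vᵀ = 0 := by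
    ext a k
    have h4 := congrFun (hM k) a
    simp only [Matrix.mulVec, dotProduct, Pi.sub_apply, Pi.zero_apply] at h4
    simp only [Matrix.mul_apply, Matrix.transpose_apply, Matrix.zero_apply, hV,
      Matrix.of_apply]
    convert h4 using 1
  have hunit : IsUnit Vᵀ.det := by
    rw [Matrix.det_transpose]
    exact isUnit_iff_ne_zero.2 hdet
  calc M = M * (Vᵀ * Vᵀ⁻¹) := by rw [Matrix.mul_nonsing_inv _ hunit, mul_one]
    _ = (M * Vᵀ) * Vᵀ⁻¹ := by rw [Matrix.mul_assoc]
    _ = 0 := by rw [hMV, Matrix.zero_mul]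

/-- Rigidity: an isometry matching ≥3 points of a generic configuration into itself
fixes the points. -/
lemma rigid {X : Fin n → Fin d → ℝ}
    (hinj : Function.Injective X)
    (hdist : ∀ i j k l : Fin n, i ≠ j → k ≠ l → sqd (X i) (X j) = sqd (X k) (X l) →
      (i = k ∧ j = l) ∨ (i = l ∧ j = k))
    {M : Matrix (Fin d) (Fin d) ℝ} (hM : Mᵀ * M = 1) {e : Fin d → ℝ}
    {S S' : Finset (Fin n)}
    (himg : Finset.image (fun u => M.mulVec (X u) + e) S = Finset.image X S')
    (hcard : 3 ≤ S.card) :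
    ∀ u ∈ S, M.mulVec (X u) + e = X u := by
  have hrho : ∀ u ∈ S, ∃ v, X v = M.mulVec (X u) + e := by
    intro u hu
    have : (fun u => M.mulVec (X u) + e) u ∈ Finset.image X S' := by
      rw [← himg]; exact Finset.mem_image_of_mem _ hu
    obtain ⟨v, _, hv⟩ := Finset.mem_image.1 this
    exact ⟨v, hv⟩
  choose ρ hρ using fun u (hu : u ∈ S) => hrho u hu
  have hpair : ∀ u (hu : u ∈ S) v (hv : v ∈ S), u ≠ v →
      (ρ u hu = u ∧ ρ v hv = v) ∨ (ρ u hu = v ∧ ρ v hv = u) := by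
    intro u hu v hv huv
    have hsq : sqd (X (ρ u hu)) (X (ρ v hv)) = sqd (X u) (X v) := by
      rw [hρ u hu, hρ v hv, sqd_affine hM]
    have hne : ρ u hu ≠ ρ v hv := by
      intro hcon
      have h1 : X (ρ u hu) = X (ρ v hv) := by rw [hcon]
      rw [hρ u hu, hρ v hv] at h1
      have h2 : M.mulVec (X u) = M.mulVec (X v) := by
        have := congrArg (fun z => z - e) h1
        simpa using this
      exact huv (hinj (mulVec_injO hM h2))
    exact hdist _ _ _ _ hne huv hsq
  intro u hu
  have herase : 1 < (S.erase u).card := by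
    rw [Finset.card_erase_of_mem hu]; omega
  obtain ⟨v, hvmem, w, hwmem, hvw⟩ := Finset.one_lt_card.1 herase
  have hv : v ∈ S := Finset.mem_of_mem_erase hvmem
  have hw : w ∈ S := Finset.mem_of_mem_erase hwmem
  have hvu : v ≠ u := Finset.ne_of_mem_erase hvmem
  have hwu : w ≠ u := Finset.ne_of_mem_erase hwmem
  rcases hpair u hu v hv (Ne.symm hvu) with ⟨h1, _⟩ | ⟨h1, _⟩
  · rw [← hρ u hu, h1]
  · rcases hpair u hu w hw (Ne.symm hwu) with ⟨h2, _⟩ | ⟨h2, _⟩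
    · rw [← hρ u hu, h2]
    · exact absurd (h1 ▸ h2 : v = w) hvw

end EGG
namespace EGG

lemma rel_exists_lists {α β : Type*} {r : α → β → Prop} :
    ∀ {s : Multiset α} {t : Multiset β}, Multiset.Rel r s t →
      ∃ (l₁ : List α) (l₂ : List β), List.Forall₂ r l₁ l₂ ∧ s = ↑l₁ ∧ t = ↑l₂ := by
  intro s t h
  induction h with
  | zero => exact ⟨[], [], List.Forall₂.nil, rfl, rfl⟩
  | @cons a b s t hab hst ih =>
      obtain ⟨l₁, l₂, hf, rfl, rfl⟩ := ih
      exact ⟨a :: l₁, b :: l₂, List.Forall₂.cons hab hf,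
        by rw [Multiset.cons_coe], by rw [Multiset.cons_coe]⟩

lemma rel_univ_equiv {N M : ℕ} {r : Fin N → Fin M → Prop}
    (h : Multiset.Rel r Finset.univ.val Finset.univ.val) :
    N = M ∧ ∃ σ : Fin N → Fin M, Function.Bijective σ ∧ ∀ a, r a (σ a) := by
  obtain ⟨l₁, l₂, hf, h1, h2⟩ := rel_exists_lists h
  have hn2 : l₂.Nodup := by
    rw [← Multiset.coe_nodup, ← h2]; exact Finset.univ.nodup
  have hl1 : l₁.length = N := by
    have h3 := congrArg Multiset.card h1
    simpa using h3.symm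
  have hl2 : l₂.length = M := by
    have h3 := congrArg Multiset.card h2
    simpa using h3.symm
  have hNM : N = M := by rw [← hl1, ← hl2, hf.length_eq]
  have hmem1 : ∀ a : Fin N, a ∈ l₁ := by
    intro a
    rw [← Multiset.mem_coe, ← h1]
    simp
  have hidx : ∀ a : Fin N, l₁.idxOf a < l₂.length := by
    intro a
    rw [← hf.length_eq]
    exact List.idxOf_lt_length_iff.2 (hmem1 a)
  refine ⟨hNM, fun a => l₂.get ⟨l₁.idxOf a, hidx a⟩, ?_, ?_⟩
  · have hinj : Function.Injective (fun a : Fin N => l₂.get ⟨l₁.idxOf a, hidx a⟩) := by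
      intro a b hab
      have h3 := List.nodup_iff_injective_get.1 hn2 hab
      have h4 : l₁.idxOf a = l₁.idxOf b := by
        simpa using congrArg Fin.val h3
      have h5 : l₁.get ⟨l₁.idxOf a, List.idxOf_lt_length_iff.2 (hmem1 a)⟩ =
          l₁.get ⟨l₁.idxOf b, List.idxOf_lt_length_iff.2 (hmem1 b)⟩ := by
        congr 1
        exact Fin.ext h4
      rwa [List.idxOf_get, List.idxOf_get] at h5
    rw [Fintype.bijective_iff_injective_and_card]
    exact ⟨hinj, by simp [hNM]⟩
  · intro a
    have h6 := (List.forall₂_iff_get.1 hf).2 (l₁.idxOf a)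
      (List.idxOf_lt_length_iff.2 (hmem1 a)) (hidx a)
    rwa [List.idxOf_get] at h6

lemma walk_propagate {N : ℕ} {G : SimpleGraph (Fin N)} {J : Fin N → Prop}
    (hstep : ∀ k l, J k → G.Adj k l → J l) :
    ∀ {s v : Fin N}, G.Walk s v → J s → J v := by
  intro s v w
  induction w with
  | nil => exact id
  | @cons a x b h p ih => intro hs; exact ih (hstep _ _ hs h)

lemma two_comp {N : ℕ} {G : SimpleGraph (Fin N)} {x y : Fin N}
    (hx : ∀ z, G.Adj x z → z = y) (hy : ∀ z, G.Adj y z → z = x) :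
    ∀ {s v : Fin N}, G.Walk s v → (s = x ∨ s = y) → (v = x ∨ v = y) := by
  intro s v w
  induction w with
  | nil => exact id
  | @cons a c b h p ih =>
      intro hs
      rcases hs with rfl | rfl
      · exact ih (Or.inr (hx _ h))
      · exact ih (Or.inl (hy _ h))

lemma mem_ball_one {N : ℕ} {G : SimpleGraph (Fin N)} {i u : Fin N} :
    u ∈ ballG G 1 i ↔ u = i ∨ G.Adj i u := by
  rw [mem_ballG]
  constructor
  · rintro ⟨w, hw⟩
    cases w with
    | nil => exact Or.inl rfl
    | @cons a x b h p =>
        simp only [SimpleGraph.Walk.length_cons] at hw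
        have hp0 : p.length = 0 := by omega
        have hx : x = u := SimpleGraph.Walk.eq_of_length_eq_zero hp0
        exact Or.inr (hx ▸ h)
  · rintro (rfl | h)
    · exact ⟨SimpleGraph.Walk.nil, by simp⟩
    · exact ⟨SimpleGraph.Walk.cons h SimpleGraph.Walk.nil, by simp⟩

end EGG
namespace EGG

open Matrix

lemma ball_one_structure {N : ℕ} {G : SimpleGraph (Fin N)} {i : Fin N}
    (h2 : (ballG G 1 i).card = 2) :
    ∃ u, u ≠ i ∧ ballG G 1 i = {i, u} ∧ G.Adj i u ∧ ∀ z, G.Adj i z → z = u := by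
  obtain ⟨x, y, hxy, hset⟩ := Finset.card_eq_two.1 h2
  have hi : i ∈ ballG G 1 i := self_mem_ballG
  rw [hset] at hi
  have key : ∀ u : Fin N, u ≠ i → ballG G 1 i = {i, u} →
      (u ≠ i ∧ ballG G 1 i = {i, u} ∧ G.Adj i u ∧ ∀ z, G.Adj i z → z = u) := by
    intro u hne hball
    have humem : u ∈ ballG G 1 i := by rw [hball]; simp
    have hadj : G.Adj i u := by
      rcases mem_ball_one.1 humem with h | h
      · exact absurd h hne
      · exact h
    refine ⟨hne, hball, hadj, ?_⟩
    intro z hz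
    have hzmem : z ∈ ballG G 1 i := mem_ball_one.2 (Or.inr hz)
    rw [hball] at hzmem
    rcases Finset.mem_insert.1 hzmem with h | h
    · exact absurd h.symm hz.ne
    · exact Finset.mem_singleton.1 h
  rcases Finset.mem_insert.1 hi with rfl | hi2
  · exact ⟨y, key y (Ne.symm hxy) hset⟩
  · have hiy : i = y := Finset.mem_singleton.1 hi2
    subst hiy
    exact ⟨x, key x hxy (by rw [hset, Finset.pair_comm])⟩

lemma step_main {n d : ℕ}
    {A B : SimpleGraph (Fin n)} {X Y : Fin n → Fin d → ℝ}
    (hA : A.Connected)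
    (hinj : Function.Injective X)
    (hdist : ∀ i j k l : Fin n, i ≠ j → k ≠ l → sqd (X i) (X j) = sqd (X k) (X l) →
      (i = k ∧ j = l) ∨ (i = l ∧ j = k))
    (hspan : ∀ u : Fin (d+1) → Fin n, Function.Injective u →
      ∀ M : Matrix (Fin d) (Fin d) ℝ,
        (∀ k : Fin d, M.mulVec (X (u k.succ) - X (u 0)) = 0) → M = 0)
    (hn : d + 3 ≤ n) (hd : 1 ≤ d)
    (σ : Fin n ≃ Fin n)
    (Qf : Fin n → Matrix (Fin d) (Fin d) ℝ)
    (hQf : ∀ a, (Qf a)ᵀ * (Qf a) = 1 ∧ (Qf a) * (Qf a)ᵀ = 1)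
    (hσ : ∀ a, IsMatch A X B Y (Qf a) (d+1) a (σ a))
    {Q₀ : Matrix (Fin d) (Fin d) ℝ} (hQ₀ : Q₀ᵀ * Q₀ = 1 ∧ Q₀ * Q₀ᵀ = 1)
    {c₀ : Fin d → ℝ} {l l' : Fin n}
    (hMl : IsMatch A X B Y Q₀ d l l')
    (hpos : Y l' = Q₀.mulVec (X l) + c₀) :
    σ l = l' ∧ IsMatch A X B Y Q₀ (d+1) l l' := by
  obtain ⟨a, ha⟩ : ∃ a, σ a = l' := ⟨σ.symm l', Equiv.apply_symm_apply σ l'⟩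
  have hMa : IsMatch A X B Y (Qf a) (d+1) a l' := ha ▸ hσ a
  have hMa' : IsMatch A X B Y (Qf a) d a l' := hMa.mono (Nat.le_succ d)
  set ca := Y l' - (Qf a).mulVec (X a) with hca
  have hposa : Y l' = (Qf a).mulVec (X a) + ca := by rw [hca]; abel
  have E : Finset.image (fun u => Q₀.mulVec (X u) + c₀) (ballG A d l) =
      Finset.image (fun u => (Qf a).mulVec (X u) + ca) (ballG A d a) :=
    (ball_image_eq hMl hpos).symm.trans (ball_image_eq hMa' hposa)
  set M := (Qf a)ᵀ * Q₀ with hMdef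
  set e := (Qf a)ᵀ.mulVec (c₀ - ca) with hedef
  have hMorth : Mᵀ * M = 1 := by
    rw [hMdef, Matrix.transpose_mul, Matrix.transpose_transpose, Matrix.mul_assoc,
      ← Matrix.mul_assoc (Qf a) (Qf a)ᵀ Q₀, (hQf a).2, Matrix.one_mul, hQ₀.1]
  set g : (Fin d → ℝ) → (Fin d → ℝ) := fun z => (Qf a)ᵀ.mulVec (z - ca) with hgdef
  have hg1 : ∀ u : Fin n, g (Q₀.mulVec (X u) + c₀) = M.mulVec (X u) + e := by
    intro u
    show (Qf a)ᵀ.mulVec (Q₀.mulVec (X u) + c₀ - ca) = _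
    have h1 : Q₀.mulVec (X u) + c₀ - ca = Q₀.mulVec (X u) + (c₀ - ca) := by abel
    rw [h1, Matrix.mulVec_add, Matrix.mulVec_mulVec, hedef, hMdef]
  have hg2 : ∀ u : Fin n, g ((Qf a).mulVec (X u) + ca) = X u := by
    intro u
    show (Qf a)ᵀ.mulVec ((Qf a).mulVec (X u) + ca - ca) = _
    rw [add_sub_cancel_right, Matrix.mulVec_mulVec, (hQf a).1, Matrix.one_mulVec]
  have himg : Finset.image (fun u => M.mulVec (X u) + e) (ballG A d l)
      = Finset.image X (ballG A d a) := by
    have h1 := congrArg (Finset.image g) E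
    rw [Finset.image_image, Finset.image_image] at h1
    rwa [show g ∘ (fun u => Q₀.mulVec (X u) + c₀) = fun u => M.mulVec (X u) + e from
      funext hg1, show g ∘ (fun u => (Qf a).mulVec (X u) + ca) = X from funext hg2] at h1
  have hTl : M.mulVec (X l) + e = X a := by
    rw [← hg1 l, ← hpos, hposa]
    exact hg2 a
  have hcard : d + 1 ≤ (ballG A d l).card := by
    have h1 := ballG_card (fun v => hA.preconnected l v) d
    have h2 : min (d+1) n = d+1 := min_eq_left (by omega)
    omega
  have hlball : l ∈ ballG A d l := self_mem_ballG
  rcases lt_or_ge (ballG A d l).card 3 with h3 | h3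
  · -- small-ball case: d = 1 and the ball is an edge
    have hd1 : d = 1 := by omega
    subst hd1
    have hc2 : (ballG A 1 l).card = 2 := by omega
    obtain ⟨u₀, hu₀ne, hball, hadjlu, hNl⟩ := ball_one_structure hc2
    have hlu₀ : l ≠ u₀ := Ne.symm hu₀ne
    have hTinj : ∀ u v : Fin n, M.mulVec (X u) + e = M.mulVec (X v) + e → u = v := by
      intro u v huv
      have h5 : M.mulVec (X u) = M.mulVec (X v) := by
        have := congrArg (fun z => z - e) huv
        simpa using this
      exact hinj (mulVec_injO hMorth h5)
    rw [hball] at himg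
    have himgpair : Finset.image X (ballG A 1 a) =
        {M.mulVec (X l) + e, M.mulVec (X u₀) + e} := by
      rw [← himg, Finset.image_insert, Finset.image_singleton]
    have hcarda : (ballG A 1 a).card = 2 := by
      have h5 : (Finset.image X (ballG A 1 a)).card = (ballG A 1 a).card :=
        Finset.card_image_of_injective _ hinj
      rw [himgpair] at h5
      rw [← h5, Finset.card_insert_of_notMem, Finset.card_singleton]
      simp only [Finset.mem_singleton]
      intro hcon
      exact hlu₀ (hTinj _ _ hcon)
    obtain ⟨u₁, hu₁ne, hballa, hadjau, hNa⟩ := ball_one_structure hcarda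
    have hTu₀ : M.mulVec (X u₀) + e = X u₁ := by
      have h5 : M.mulVec (X u₀) + e ∈ Finset.image X (ballG A 1 a) := by
        rw [himgpair]; simp
      obtain ⟨v, hv, hXv⟩ := Finset.mem_image.1 h5
      rw [hballa] at hv
      rcases Finset.mem_insert.1 hv with rfl | hv2
      · exfalso
        have h6 : M.mulVec (X l) + e = M.mulVec (X u₀) + e := by rw [hTl, hXv]
        exact hlu₀ (hTinj _ _ h6)
      · rw [← hXv, Finset.mem_singleton.1 hv2]
    have hsd : sqd (X l) (X u₀) = sqd (X a) (X u₁) := by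
      rw [← hTl, ← hTu₀]
      exact (sqd_affine hMorth e _ _).symm
    rcases hdist l u₀ a u₁ hlu₀ (Ne.symm hu₁ne) hsd with ⟨hal, hu01⟩ | ⟨hB1, hB2⟩
    · -- a = l (up to symm) and u₀ = u₁ : conclude
      have hal' : a = l := hal.symm
      have hfixl : M.mulVec (X l) + e = X l := by rw [hTl, hal']
      have hfixu : M.mulVec (X u₀) + e = X u₀ := by rw [hTu₀, ← hu01]
      have huinj : Function.Injective ![l, u₀] := by
        intro k1 k2 hk
        fin_cases k1 <;> fin_cases k2 <;>
          simp only [Matrix.cons_val_zero, Matrix.cons_val_one, Matrix.head_cons] at hk <;>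
          first
          | rfl
          | exact absurd hk hlu₀
          | exact absurd hk.symm hlu₀
      have hM1 : M - 1 = 0 := by
        apply hspan ![l, u₀] huinj
        intro k
        have hk : k = 0 := Fin.eq_zero k
        subst hk
        show (M - 1).mulVec (X u₀ - X l) = 0
        rw [Matrix.sub_mulVec, Matrix.one_mulVec, Matrix.mulVec_sub]
        have f1 : M.mulVec (X u₀) = X u₀ - e := by rw [eq_sub_iff_add_eq]; exact hfixu
        have f2 : M.mulVec (X l) = X l - e := by rw [eq_sub_iff_add_eq]; exact hfixl
        rw [f1, f2]; abel
      have hMeq : M = 1 := by rwa [sub_eq_zero] at hM1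
      have hQa : Qf a = Q₀ := by
        have h4 : Qf a * M = Qf a * 1 := by rw [hMeq]
        rw [hMdef, ← Matrix.mul_assoc, (hQf a).2, Matrix.one_mul, mul_one] at h4
        exact h4.symm
      refine ⟨by rw [← hal', ha], ?_⟩
      rw [← hQa, ← hal']
      exact hMa
    · -- impossible: component of size two
      exfalso
      have hNu₀ : ∀ z, A.Adj u₀ z → z = l := by
        intro z hz
        have h6 : A.Adj a z := by rwa [← hB2]
        rw [hNa z h6, ← hB1]
      obtain ⟨v, hvl, hvu₀⟩ : ∃ v : Fin n, v ≠ l ∧ v ≠ u₀ := by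
        by_contra hcon
        push_neg at hcon
        have hsub : (Finset.univ : Finset (Fin n)) ⊆ {l, u₀} := by
          intro v _
          by_cases h7 : v = l
          · simp [h7]
          · simp [hcon v h7]
        have h8 := Finset.card_le_card hsub
        have h9 : ({l, u₀} : Finset (Fin n)).card ≤ 2 :=
          Finset.card_insert_le _ _ |>.trans (by simp)
        simp only [Finset.card_univ, Fintype.card_fin] at h8
        omega
      obtain ⟨w⟩ := hA.preconnected l v
      rcases two_comp hNl hNu₀ w (Or.inl rfl) with h | h
      · exact hvl h
      · exact hvu₀ h
  · -- big-ball case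
    have hfix := rigid hinj hdist hMorth himg h3
    have hal : a = l := hinj (by rw [← hTl, hfix l hlball])
    obtain ⟨S₀, hS₀sub, hS₀card⟩ := Finset.exists_subset_card_eq hcard
    set u : Fin (d+1) → Fin n := fun k => ((S₀.orderIsoOfFin hS₀card k : Fin n)) with hudef
    have huinj : Function.Injective u := by
      intro k1 k2 hk
      exact (S₀.orderIsoOfFin hS₀card).injective (Subtype.ext hk)
    have humem : ∀ k, u k ∈ ballG A d l := fun k =>
      hS₀sub (S₀.orderIsoOfFin hS₀card k).2
    have hM1 : M - 1 = 0 := by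
      apply hspan u huinj
      intro k
      rw [Matrix.sub_mulVec, Matrix.one_mulVec, Matrix.mulVec_sub]
      have f1 : M.mulVec (X (u k.succ)) = X (u k.succ) - e := by
        rw [eq_sub_iff_add_eq]; exact hfix (u k.succ) (humem k.succ)
      have f2 : M.mulVec (X (u 0)) = X (u 0) - e := by
        rw [eq_sub_iff_add_eq]; exact hfix (u 0) (humem 0)
      rw [f1, f2]; abel
    have hMeq : M = 1 := by rwa [sub_eq_zero] at hM1
    have hQa : Qf a = Q₀ := by
      have h4 : Qf a * M = Qf a * 1 := by rw [hMeq]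
      rw [hMdef, ← Matrix.mul_assoc, (hQf a).2, Matrix.one_mul, mul_one] at h4
      exact h4.symm
    refine ⟨by rw [← hal, ha], ?_⟩
    rw [← hQa, ← hal]
    exact hMa

end EGG

/-- Positive direction of Theorem 4.1: a maximally expressive E-GGNN of depth d+1
generically identifies every connected graph. -/
theorem eggnn_identifies_connected
    {d n m : ℕ} (hd : 1 ≤ d)
    (A : SimpleGraph (Fin n)) (hA : A.Connected)
    (X : Fin n → Fin d → ℝ) (hX : IsGeneric X)
    (B : SimpleGraph (Fin m)) (Y : Fin m → Fin d → ℝ)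
    (h : eglobalEq A X B Y (d+1)) :
    n = m ∧ GeomIso A X B Y := by
  unfold eglobalEq eglobal at h
  rw [Multiset.rel_map_left, Multiset.rel_map_right] at h
  obtain ⟨hnm, σ0, hσbij, hσ0⟩ := EGG.rel_univ_equiv h
  subst hnm
  refine ⟨rfl, ?_⟩
  rcases Nat.eq_zero_or_pos n with hn0 | hn0
  · subst hn0
    exact ⟨Equiv.refl _, 1, by rw [Matrix.mem_orthogonalGroup_iff]; simp, 0,
      fun i j => i.elim0, fun i => i.elim0⟩
  have hσ0' : ∀ a, ∃ Q : Matrix (Fin d) (Fin d) ℝ,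
      Q ∈ Matrix.orthogonalGroup (Fin d) ℝ ∧
      actE Q (d+1) (ewl A X (d+1) a) = ewl B Y (d+1) (σ0 a) := hσ0
  choose Qf hQmem hQf using hσ0'
  set σ : Fin n ≃ Fin n := Equiv.ofBijective σ0 hσbij with hσdef
  have hσM : ∀ a, EGG.IsMatch A X B Y (Qf a) (d+1) a (σ a) := fun a => hQf a
  have star_eq : ∀ Q : Matrix (Fin d) (Fin d) ℝ, star Q = Q.transpose := fun Q => by
    rw [Matrix.star_eq_conjTranspose, Matrix.conjTranspose_eq_transpose_of_trivial]
  have hQorth : ∀ a, (Qf a).transpose * (Qf a) = 1 ∧ (Qf a) * (Qf a).transpose = 1 := by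
    intro a
    constructor
    · have h1 := (Matrix.mem_orthogonalGroup_iff' (Fin d) ℝ).1 (hQmem a)
      exact h1
    · have h1 := (Matrix.mem_orthogonalGroup_iff (Fin d) ℝ).1 (hQmem a)
      exact h1
  have hinj : Function.Injective X := EGG.generic_inj hd hX
  have hdist := EGG.generic_sqd hd hX
  have hspan := EGG.generic_span hX
  set i₀ : Fin n := ⟨0, hn0⟩
  set Q₀ := Qf i₀ with hQ₀def
  set c₀ : Fin d → ℝ := Y (σ i₀) - Q₀.mulVec (X i₀) with hc₀def
  have hpos₀ : Y (σ i₀) = Q₀.mulVec (X i₀) + c₀ := by rw [hc₀def]; abel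
  rcases lt_or_ge (d+2) n with hbig | hsmall
  · -- BIG case : n ≥ d + 3
    have hn' : d + 3 ≤ n := hbig
    set J : Fin n → Prop := fun k => EGG.IsMatch A X B Y Q₀ (d+1) k (σ k) ∧
      Y (σ k) = Q₀.mulVec (X k) + c₀ with hJdef
    have hJ0 : J i₀ := ⟨hσM i₀, hpos₀⟩
    have hstep : ∀ k l, J k → A.Adj k l → J l := by
      intro k l hJk hadj
      obtain ⟨l', hBadj, hMl, hYl⟩ := EGG.step_forward hJk.1 hadj
      have hposl : Y l' = Q₀.mulVec (X l) + c₀ := by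
        rw [hYl, hJk.2, Matrix.mulVec_sub]; abel
      obtain ⟨hσl, hMl'⟩ := EGG.step_main hA hinj hdist hspan hn' hd σ Qf hQorth hσM
        (hQorth i₀) hMl hposl
      exact ⟨by rw [hσl]; exact hMl', by rw [hσl]; exact hposl⟩
    have hJall : ∀ k, J k := by
      intro k
      obtain ⟨w⟩ := hA.preconnected i₀ k
      exact EGG.walk_propagate hstep w hJ0
    refine ⟨σ, Q₀, hQmem i₀, c₀, ?_, fun i => (hJall i).2⟩
    intro k l
    constructor
    · intro hBadj
      obtain ⟨l₂, hAadj, hMl₂, hYl₂⟩ := EGG.step_backward (hJall k).1 hBadj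
      have hposl₂ : Y (σ l) = Q₀.mulVec (X l₂) + c₀ := by
        rw [hYl₂, (hJall k).2, Matrix.mulVec_sub]; abel
      obtain ⟨hσl₂, _⟩ := EGG.step_main hA hinj hdist hspan hn' hd σ Qf hQorth hσM
        (hQorth i₀) hMl₂ hposl₂
      have hl₂ : l₂ = l := σ.injective hσl₂
      rwa [hl₂] at hAadj
    · intro hAadj
      obtain ⟨l', hBadj, hMl, hYl⟩ := EGG.step_forward (hJall k).1 hAadj
      have hposl : Y l' = Q₀.mulVec (X l) + c₀ := by
        rw [hYl, (hJall k).2, Matrix.mulVec_sub]; abel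
      obtain ⟨hσl, _⟩ := EGG.step_main hA hinj hdist hspan hn' hd σ Qf hQorth hσM
        (hQorth i₀) hMl hposl
      rwa [hσl]
  · -- SMALL case : n ≤ d + 2
    have hreach : ∀ v, A.Reachable i₀ v := fun v => hA.preconnected i₀ v
    have hballall : ∀ v : Fin n, v ∈ EGG.ballG A (d+1) i₀ := by
      have h1 := EGG.ballG_card hreach (d+1)
      have h2 : min (d+2) n = n := min_eq_right (by omega)
      rw [h2] at h1
      have h3 : (EGG.ballG A (d+1) i₀).card = Fintype.card (Fin n) := by
        have hle := Finset.card_le_univ (EGG.ballG A (d+1) i₀)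
        rw [Fintype.card_fin] at hle ⊢
        omega
      intro v
      rw [Finset.eq_univ_of_card _ h3]
      exact Finset.mem_univ v
    have hψ : ∀ l : Fin n, ∃ l', (∃ w' : B.Walk (σ i₀) l', w'.length ≤ d+1) ∧
        Y l' = Q₀.mulVec (X l) + c₀ := by
      intro l
      obtain ⟨w, hw⟩ := EGG.mem_ballG.1 (hballall l)
      obtain ⟨u', w', hlen, _, hposu⟩ := EGG.walk_forward w (hσM i₀) hpos₀ hw
      exact ⟨u', ⟨w', by omega⟩, hposu⟩
    choose ψ hψw hψpos using hψ
    have hQinj : ∀ x y : Fin d → ℝ, Q₀.mulVec x = Q₀.mulVec y → x = y :=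
      fun x y => EGG.mulVec_injO (hQorth i₀).1
    have hψinj : Function.Injective ψ := by
      intro k l hkl
      have h1 := hψpos k
      rw [hkl, hψpos l] at h1
      exact hinj (hQinj _ _ (add_right_cancel h1.symm))
    have hψbij : Function.Bijective ψ :=
      (Fintype.bijective_iff_injective_and_card ψ).2 ⟨hψinj, by simp⟩
    have hYinj : ∀ j j' : Fin n, Y j = Y j' → j = j' := by
      intro j j' hY
      obtain ⟨k, rfl⟩ := hψbij.surjective j
      obtain ⟨k', rfl⟩ := hψbij.surjective j'
      have h3 := (hψpos k).symm.trans (hY.trans (hψpos k'))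
      have h4 : k = k' := hinj (hQinj _ _ (add_right_cancel h3))
      rw [h4]
    have hBreach : ∀ v, B.Reachable (σ i₀) v := by
      intro v
      obtain ⟨k, rfl⟩ := hψbij.surjective v
      obtain ⟨w', _⟩ := hψw k
      exact ⟨w'⟩
    have hcardA : n - 1 ≤ (EGG.ballG A d i₀).card := by
      have h1 := EGG.ballG_card hreach d
      have h2 : n - 1 ≤ min (d+1) n := le_min (by omega) (by omega)
      omega
    have hcardB : n - 1 ≤ (EGG.ballG B d (σ i₀)).card := by
      have h1 := EGG.ballG_card hBreach d
      have h2 : n - 1 ≤ min (d+1) n := le_min (by omega) (by omega)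
      omega
    have hside : ∀ (G : SimpleGraph (Fin n)) (i : Fin n),
        n - 1 ≤ (EGG.ballG G d i).card → ∀ k l : Fin n, G.Adj k l →
        k ∈ EGG.ballG G d i ∨ l ∈ EGG.ballG G d i := by
      intro G i hcard k l hadj
      by_contra hcon
      push_neg at hcon
      have hkl : k ≠ l := hadj.ne
      have hsub : EGG.ballG G d i ⊆ Finset.univ \ {k, l} := by
        intro x hx
        simp only [Finset.mem_sdiff, Finset.mem_univ, true_and, Finset.mem_insert,
          Finset.mem_singleton]
        rintro (rfl | rfl)
        · exact hcon.1 hx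
        · exact hcon.2 hx
      have h5 : ({k, l} : Finset (Fin n)).card = 2 := by
        rw [Finset.card_insert_of_notMem (by simp [hkl]), Finset.card_singleton]
      have h6 := Finset.card_le_univ ({k, l} : Finset (Fin n))
      rw [Fintype.card_fin, h5] at h6
      have h7 : (Finset.univ \ {k, l} : Finset (Fin n)).card = n - 2 := by
        rw [Finset.card_sdiff_of_subset (Finset.subset_univ _), Finset.card_univ, Fintype.card_fin, h5]
      have h8 := Finset.card_le_card hsub
      rw [h7] at h8
      omega
    have hlevel : ∀ k : Fin n, k ∈ EGG.ballG A d i₀ →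
        ∃ t', EGG.IsMatch A X B Y Q₀ (t'+1) k (ψ k) := by
      intro k hk
      obtain ⟨w, hw⟩ := EGG.mem_ballG.1 hk
      obtain ⟨u', w', hlen, hM, hposu⟩ :=
        EGG.walk_forward w (hσM i₀) hpos₀ (le_trans hw (by omega))
      have hu' : u' = ψ k := hYinj _ _ (by rw [hposu, hψpos k])
      refine ⟨d - w.length, ?_⟩
      have h9 : d + 1 - w.length = (d - w.length) + 1 := by omega
      rw [← h9, ← hu']
      exact hM
    have hpushA : ∀ k l, A.Adj k l → k ∈ EGG.ballG A d i₀ → B.Adj (ψ k) (ψ l) := by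
      intro k l hadj hk
      obtain ⟨t', hM⟩ := hlevel k hk
      obtain ⟨l', hBadj, _, hYl⟩ := EGG.step_forward hM hadj
      have hl' : l' = ψ l := hYinj _ _ (by
        rw [hYl, hψpos k, hψpos l, Matrix.mulVec_sub]; abel)
      rwa [← hl']
    have hadjAB : ∀ k l, A.Adj k l → B.Adj (ψ k) (ψ l) := by
      intro k l hadj
      rcases hside A i₀ hcardA k l hadj with hk | hl
      · exact hpushA k l hadj hk
      · exact (hpushA l k hadj.symm hl).symm
    have hlevelB : ∀ k' : Fin n, k' ∈ EGG.ballG B d (σ i₀) →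
        ∃ (k : Fin n) (t' : ℕ), ψ k = k' ∧ EGG.IsMatch A X B Y Q₀ (t'+1) k k' := by
      intro k' hk'
      obtain ⟨w', hw'⟩ := EGG.mem_ballG.1 hk'
      obtain ⟨k, w, hlen, hM, hposk⟩ :=
        EGG.walk_backward w' (hσM i₀) hpos₀ (le_trans hw' (by omega))
      have hk : ψ k = k' := hYinj _ _ (by rw [hψpos k, hposk])
      refine ⟨k, d - w'.length, hk, ?_⟩
      have h9 : d + 1 - w'.length = (d - w'.length) + 1 := by omega
      rw [← h9]
      exact hM
    have hpushB : ∀ k l, B.Adj (ψ k) (ψ l) → ψ k ∈ EGG.ballG B d (σ i₀) → A.Adj k l := by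
      intro k l hBadj hk
      obtain ⟨k₂, t', hk₂, hM⟩ := hlevelB (ψ k) hk
      have hk₂' : k₂ = k := hψinj hk₂
      subst hk₂'
      obtain ⟨l₂, hAadj, _, hYl⟩ := EGG.step_backward hM hBadj
      have hl₂ : l₂ = l := by
        have h7 : Y (ψ l) = Q₀.mulVec (X l₂) + c₀ := by
          rw [hYl, hψpos k₂, Matrix.mulVec_sub]; abel
        have h8 := (hψpos l).symm.trans h7
        exact (hinj (hQinj _ _ (add_right_cancel h8))).symm
      rwa [hl₂] at hAadj
    have hadjBA : ∀ k l, B.Adj (ψ k) (ψ l) → A.Adj k l := by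
      intro k l hBadj
      rcases hside B (σ i₀) hcardB (ψ k) (ψ l) hBadj with hk | hl
      · exact hpushB k l hBadj hk
      · exact (hpushB l k hBadj.symm hl).symm
    exact ⟨Equiv.ofBijective ψ hψbij, Q₀, hQmem i₀, c₀,
      fun i j => ⟨hadjBA i j, hadjAB i j⟩, fun i => hψpos i⟩
end

section
/- Let d ≥ 1 and let A be a disconnected simple graph on n vertices. Then for every generic X ∈ ℝ^{n×d} there exists X̂ ∈ ℝ^{n×d} such that the geometric graph (A,X̂) is not geometrically isomorphic to (A,X), and yet for every t ≥ 0 the depth-t global equivariant geometric WL features agree: V^{(t)}(A,X) = V^{(t)}(A,X̂). (Negative direction of Theorem 4.1: every E-GGNN generically fails to identify disconnected graphs.) -/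
open scoped Classical BigOperators
open MeasureTheory

noncomputable def nsq {d : ℕ} (v : Fin d → ℝ) : ℝ := ∑ l, v l ^ 2

lemma nsq_nonneg {d : ℕ} (v : Fin d → ℝ) : 0 ≤ nsq v :=
  Finset.sum_nonneg fun _ _ => sq_nonneg _

open Matrix in
lemma nsq_mulVec {d : ℕ} (Q : Matrix (Fin d) (Fin d) ℝ)
    (hQ : Q ∈ Matrix.orthogonalGroup (Fin d) ℝ) (v : Fin d → ℝ) :
    nsq (Q.mulVec v) = nsq v := by
  have h : Qᵀ * Q = 1 := by
    have := (Matrix.mem_orthogonalGroup_iff' (Fin d) ℝ).mp hQ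
    simpa [Matrix.star_eq_conjTranspose] using this
  have key : dotProduct (Q.mulVec v) (Q.mulVec v) = dotProduct v v := by
    conv_lhs => rw [Matrix.dotProduct_mulVec, ← Matrix.transpose_transpose Q,
      Matrix.vecMul_transpose, Matrix.transpose_transpose, Matrix.mulVec_mulVec, h,
      Matrix.one_mulVec]
  simpa [nsq, dotProduct, sq] using key

lemma actE_one {d : ℕ} : ∀ t (v : EFeat d t), actE (1 : Matrix (Fin d) (Fin d) ℝ) t v = v
  | 0, _ => rfl
  | (t+1), v => by
    show Multiset.map _ v = v
    conv_rhs => rw [← Multiset.map_id v]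
    exact Multiset.map_congr rfl (fun p _ => by
      simp [Matrix.one_mulVec, actE_one t p.1])

lemma eequiv_refl {d : ℕ} (t : ℕ) (v : EFeat d t) : eequiv t v v :=
  ⟨1, one_mem _, actE_one t v⟩

lemma rel_refl_of_refl {α : Type*} {r : α → α → Prop} (h : ∀ x, r x x) (m : Multiset α) :
    Multiset.Rel r m m := by
  induction m using Multiset.induction_on with
  | empty => exact Multiset.Rel.zero
  | cons a s ih => exact Multiset.Rel.cons (h a) ih

lemma ewl_congr {n d : ℕ} (A : SimpleGraph (Fin n)) (X Y : Fin n → Fin d → ℝ)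
    (h : ∀ i j, A.Adj i j → ∀ l, X i l - X j l = Y i l - Y j l) :
    ∀ t i, ewl A X t i = ewl A Y t i
  | 0, _ => rfl
  | (t+1), i => by
    simp only [ewl]
    refine Multiset.map_congr rfl (fun j hj => ?_)
    have hadj : A.Adj i j := by
      have := Finset.mem_filter.mp (Finset.mem_def.mpr hj)
      exact this.2
    have h1 := ewl_congr A X Y h t j
    have h2 : (fun l => X i l - X j l) = (fun l => Y i l - Y j l) :=
      funext (h i j hadj)
    rw [h1, h2]

/-- Negative direction of Theorem 4.1: every E-GGNN generically fails to identify
disconnected graphs. -/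
theorem eggnn_fails_on_disconnected
    {d n : ℕ} (hd : 1 ≤ d)
    (A : SimpleGraph (Fin n)) (hA : ¬ A.Preconnected)
    (X : Fin n → Fin d → ℝ) (hX : IsGeneric X) :
    ∃ X' : Fin n → Fin d → ℝ,
      ¬ GeomIso A X A X' ∧ (∀ t : ℕ, eglobalEq A X A X' t) := by
  simp only [SimpleGraph.Preconnected] at hA
  push_neg at hA
  obtain ⟨a, b, hab⟩ := hA
  set l0 : Fin d := ⟨0, hd⟩ with hl0
  set M : ℝ := ∑ i : Fin n, ∑ j : Fin n, nsq (fun l => X i l - X j l) with hMdef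
  have hM0 : 0 ≤ M :=
    Finset.sum_nonneg fun _ _ => Finset.sum_nonneg fun _ _ => nsq_nonneg _
  have hMle : ∀ i j : Fin n, nsq (fun l => X i l - X j l) ≤ M := by
    intro i j
    calc nsq (fun l => X i l - X j l)
        ≤ ∑ j' : Fin n, nsq (fun l => X i l - X j' l) :=
          Finset.single_le_sum (f := fun j' => nsq (fun l => X i l - X j' l))
            (fun _ _ => nsq_nonneg _) (Finset.mem_univ j)
      _ ≤ M :=
          Finset.single_le_sum
            (f := fun i' => ∑ j' : Fin n, nsq (fun l => X i' l - X j' l))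
            (fun _ _ => Finset.sum_nonneg fun _ _ => nsq_nonneg _) (Finset.mem_univ i)
  set w0 : ℝ := X a l0 - X b l0 with hw0
  set c : ℝ := max 1 (M + 2 * |w0| + 1) with hcdef
  have hc1 : (1 : ℝ) ≤ c := le_max_left _ _
  have hc2 : M + 2 * |w0| + 1 ≤ c := le_max_right _ _
  set X' : Fin n → Fin d → ℝ :=
    fun i l => X i l + (if A.Reachable a i then (if l = l0 then c else 0) else 0) with hX'
  have hvla : ∀ l, X' a l - X' b l = (X a l - X b l) + (if l = l0 then c else 0) := by
    intro l
    simp only [hX']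
    rw [if_pos (SimpleGraph.Reachable.refl a), if_neg hab]
    ring
  have hsum : nsq (fun l => X' a l - X' b l)
      = nsq (fun l => X a l - X b l) + (2 * (X a l0 - X b l0) * c + c ^ 2) := by
    simp only [nsq, hvla]
    have hpt : ∀ l : Fin d, ((X a l - X b l) + (if l = l0 then c else 0)) ^ 2
        = (X a l - X b l) ^ 2
          + (if l = l0 then 2 * (X a l - X b l) * c + c ^ 2 else 0) := by
      intro l; split_ifs <;> ring
    rw [Finset.sum_congr rfl fun l _ => hpt l, Finset.sum_add_distrib,
      Finset.sum_ite_eq' Finset.univ l0, if_pos (Finset.mem_univ l0)]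
  refine ⟨X', ?_, ?_⟩
  · rintro ⟨σ, Q, hQ, t, hadj, hpos⟩
    have hkey : ∀ i j : Fin n,
        nsq (fun l => X' (σ i) l - X' (σ j) l) = nsq (fun l => X i l - X j l) := by
      intro i j
      have heq : (fun l => X' (σ i) l - X' (σ j) l) = Q.mulVec (X i - X j) := by
        funext l
        rw [hpos i, hpos j, Matrix.mulVec_sub]
        simp [Pi.add_apply, Pi.sub_apply]
      rw [heq, nsq_mulVec Q hQ]
      congr 1
    have h1 : nsq (fun l => X' a l - X' b l) ≤ M := by
      have h := hkey (σ.symm a) (σ.symm b)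
      rw [σ.apply_symm_apply, σ.apply_symm_apply] at h
      rw [h]; exact hMle _ _
    have h3 : (M + 1) * 1 ≤ (c - 2 * |w0|) * c := by
      have hb1 : M + 1 ≤ c - 2 * |w0| := by linarith
      have hb2 : (0:ℝ) ≤ M + 1 := by linarith
      exact mul_le_mul hb1 hc1 zero_le_one (by linarith)
    have h4 : -|w0| * c ≤ w0 * c :=
      mul_le_mul_of_nonneg_right (neg_abs_le w0) (by linarith)
    have h2 : M < nsq (fun l => X' a l - X' b l) := by
      rw [hsum, ← hw0]
      nlinarith [nsq_nonneg (fun l => X a l - X b l), h3, h4]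
    linarith
  · intro t
    have hdiff : ∀ i j : Fin n, A.Adj i j → ∀ l, X i l - X j l = X' i l - X' j l := by
      intro i j hij l
      have hiff : A.Reachable a i ↔ A.Reachable a j :=
        ⟨fun h => h.trans hij.reachable, fun h => h.trans hij.symm.reachable⟩
      simp only [hX']
      by_cases h : A.Reachable a i
      · rw [if_pos h, if_pos (hiff.mp h)]; ring
      · rw [if_neg h, if_neg (fun hj => h (hiff.mpr hj))]; ring
    have hglob : eglobal A X t = eglobal A X' t :=
      Multiset.map_congr rfl fun i _ => ewl_congr A X X' hdiff t i
    unfold eglobalEq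
    rw [← hglob]
    exact rel_refl_of_refl (eequiv_refl t) _
end

section
/- Let X = (x_1,…,x_n) and X̂ = (x̂_1,…,x̂_n) be point clouds in ℝ^d. Suppose there exist indices i, k ∈ {1,…,n} and an orthogonal matrix Q ∈ O(d) such that the multisets of differences agree: {{x_i − x_j : j = 1,…,n}} = {{Q(x̂_k − x̂_j) : j = 1,…,n}}. Then X and X̂ are related by a permutation and a rigid motion: there exist a permutation σ of {1,…,n}, Q' ∈ O(d), and t ∈ ℝ^d with x̂_{σ(j)} = Q' x_j + t for all j. (One iteration of a maximally expressive E-GGNN on a full graph reconstructs the point cloud up to symmetry.) -/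
open scoped Classical BigOperators
open MeasureTheory

lemma exists_perm_of_map_eq : ∀ {n : ℕ} {α : Type} (f g : Fin n → α),
    Finset.univ.val.map f = Finset.univ.val.map g →
    ∃ σ : Equiv.Perm (Fin n), ∀ j, f j = g (σ j) := by
  intro n
  induction n with
  | zero => intro α f g h; exact ⟨1, fun j => j.elim0⟩
  | succ n ih =>
    intro α f g h
    have h0 : f 0 ∈ Finset.univ.val.map g := by
      rw [← h]; exact Multiset.mem_map_of_mem f (Finset.mem_univ (0 : Fin (n+1)))
    obtain ⟨k, -, hk⟩ := Multiset.mem_map.1 h0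
    set g'' : Fin (n+1) → α := g ∘ (Equiv.swap 0 k) with hg''
    have hswap : Finset.univ.val.map g'' = Finset.univ.val.map g := by
      have hperm : Finset.univ.val.map (⇑(Equiv.swap 0 k)) = Finset.univ.val := by
        have h2 := Finset.map_univ_equiv (Equiv.swap 0 k)
        calc Finset.univ.val.map (⇑(Equiv.swap 0 k))
            = (Finset.univ.map (Equiv.swap 0 k).toEmbedding).val := rfl
          _ = Finset.univ.val := by rw [h2]
      rw [hg'', ← Multiset.map_map g (⇑(Equiv.swap 0 k)), hperm]
    have h' : Finset.univ.val.map f = Finset.univ.val.map g'' := by rw [hswap, h]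
    have huniv : (Finset.univ : Finset (Fin (n+1))).val
        = 0 ::ₘ ((Finset.univ : Finset (Fin n)).val.map Fin.succ) := by
      rw [Fin.univ_succ]; rfl
    rw [huniv, Multiset.map_cons, Multiset.map_cons, Multiset.map_map, Multiset.map_map] at h'
    have hfg0 : f 0 = g'' 0 := by simp [hg'', hk]
    rw [hfg0, Multiset.cons_inj_right] at h'
    obtain ⟨σ', hσ'⟩ := ih (f ∘ Fin.succ) (g'' ∘ Fin.succ) h'
    refine ⟨(Equiv.Perm.decomposeFin.symm (0, σ')).trans (Equiv.swap 0 k), fun j => ?_⟩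
    refine Fin.cases ?_ (fun a => ?_) j
    · simpa [hg''] using hfg0
    · have := hσ' a
      simpa [hg'', Equiv.Perm.decomposeFin_symm_apply_succ] using this

/-- One iteration of a maximally expressive E-GGNN on a full graph reconstructs the
point cloud up to permutation and rigid motion. -/
theorem full_graph_one_iteration_reconstructs
    {d n : ℕ} (X Y : Fin n → Fin d → ℝ) (i k : Fin n)
    (Q : Matrix (Fin d) (Fin d) ℝ) (hQ : Q ∈ Matrix.orthogonalGroup (Fin d) ℝ)
    (h : Finset.univ.val.map (fun j => (fun l => X i l - X j l : Fin d → ℝ)) =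
         Finset.univ.val.map (fun j => Q.mulVec (fun l => Y k l - Y j l))) :
    ∃ σ : Equiv.Perm (Fin n), ∃ Q' : Matrix (Fin d) (Fin d) ℝ,
      Q' ∈ Matrix.orthogonalGroup (Fin d) ℝ ∧ ∃ t : Fin d → ℝ,
      ∀ j, Y (σ j) = Q'.mulVec (X j) + t := by
  obtain ⟨σ, hσ⟩ := exists_perm_of_map_eq
    (fun j => (fun l => X i l - X j l : Fin d → ℝ))
    (fun j => Q.mulVec (fun l => Y k l - Y j l)) h
  have hQ1 : Q * Q.transpose = 1 := by
    have := (Matrix.mem_orthogonalGroup_iff (Fin d) ℝ).1 hQ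
    simpa [Matrix.star_eq_conjTranspose, Matrix.conjTranspose_eq_transpose_of_trivial] using this
  have hQ2 : Q.transpose * Q = 1 := mul_eq_one_comm.1 hQ1
  refine ⟨σ, Q.transpose, ?_, (fun l => Y k l) - Q.transpose.mulVec (X i), fun j => ?_⟩
  · rw [Matrix.mem_orthogonalGroup_iff]
    simpa [Matrix.star_eq_conjTranspose, Matrix.conjTranspose_eq_transpose_of_trivial] using hQ2
  · have hj := hσ j
    have h2 : Q.transpose.mulVec (fun l => X i l - X j l)
        = Q.transpose.mulVec (Q.mulVec (fun l => Y k l - Y (σ j) l)) := by rw [hj]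
    rw [Matrix.mulVec_mulVec, hQ2, Matrix.one_mulVec] at h2
    have h3 : (fun l => Y k l - Y (σ j) l) = Q.transpose.mulVec (fun l => X i l - X j l) := h2.symm
    have h4 : (fun l => X i l - X j l) = X i - X j := by funext l; simp
    rw [h4, Matrix.mulVec_sub] at h3
    funext l
    have h5 := congrFun h3 l
    simp only [Pi.sub_apply, Pi.add_apply] at h5 ⊢
    linarith
end

section
/- Let A and Â be connected simple graphs on vertex set {1,…,n}, and let X, X̂ ∈ ℝ^{n×d} be position matrices whose points are pairwise distinct (x_i ≠ x_j and x̂_i ≠ x̂_j for i ≠ j). Suppose there exist vertices i, k and Q ∈ O(d) such that the depth-n equivariant geometric WL features satisfy v_i^{(n)}(A,X) = Q · v_k^{(n)}(Â,X̂). Then X and X̂ are related by a permutation and a rigid motion: there exist a permutation σ of {1,…,n}, Q' ∈ O(d), and t ∈ ℝ^d with x̂_{σ(j)} = Q' x_j + t for all j. (n iterations of a maximally expressive E-GGNN on a connected graph with n nodes reconstruct the point cloud.) -/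
open scoped Classical BigOperators
open MeasureTheory

lemma ewl_step {n d : ℕ} (A B : SimpleGraph (Fin n)) (X Y : Fin n → Fin d → ℝ)
    (Q : Matrix (Fin d) (Fin d) ℝ) (s : ℕ) (j j' : Fin n)
    (h : ewl A X (s+1) j = actE Q (s+1) (ewl B Y (s+1) j'))
    (b : Fin n) (hb : A.Adj j b) :
    ∃ b', B.Adj j' b' ∧ ewl A X s b = actE Q s (ewl B Y s b') ∧
      X j - X b = Q.mulVec (Y j' - Y b') := by
  have h' : ((Finset.univ.filter (fun c => A.Adj j c)).val.map
      (fun c => (ewl A X s c, fun l => X j l - X c l)))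
      = ((Finset.univ.filter (fun c => B.Adj j' c)).val.map
      (fun c => (actE Q s (ewl B Y s c), Q.mulVec (fun l => Y j' l - Y c l)))) := by
    have h2 := h
    simp only [ewl, actE, Multiset.map_map, Function.comp] at h2
    exact h2
  have hmem : (ewl A X s b, fun l => X j l - X b l)
      ∈ ((Finset.univ.filter (fun c => A.Adj j c)).val.map
        (fun c => (ewl A X s c, fun l => X j l - X c l))) :=
    Multiset.mem_map_of_mem _ (by simp [hb])
  rw [h'] at hmem
  obtain ⟨b', hb', heq⟩ := Multiset.mem_map.mp hmem
  refine ⟨b', by simpa using hb', ?_, ?_⟩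
  · exact (Prod.mk.injEq .. ▸ heq).1.symm
  · have h3 := (Prod.mk.injEq .. ▸ heq).2.symm
    have : (fun l => X j l - X b l) = X j - X b := rfl
    rw [this] at h3
    have : (fun l => Y j' l - Y b' l) = Y j' - Y b' := rfl
    rw [this] at h3
    exact h3

lemma ewl_walk {n d : ℕ} (A B : SimpleGraph (Fin n)) (X Y : Fin n → Fin d → ℝ)
    (Q : Matrix (Fin d) (Fin d) ℝ) (hQ : Q.transpose * Q = 1)
    {j a : Fin n} (p : A.Walk j a) :
    ∀ (s : ℕ) (j' : Fin n), p.length < s →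
      ewl A X s j = actE Q s (ewl B Y s j') →
      ∃ a', Y a' - Y j' = Q.transpose.mulVec (X a - X j) := by
  induction p with
  | nil =>
    intro s j' _ _
    exact ⟨j', by simp [Matrix.mulVec_sub]⟩
  | @cons j b a hadj q ih =>
    intro s j' hlen hfeat
    obtain ⟨s', rfl⟩ : ∃ s', s = s' + 1 := by
      cases s with
      | zero => simp at hlen
      | succ m => exact ⟨m, rfl⟩
    obtain ⟨b', hb', hfeat', hpos⟩ := ewl_step A B X Y Q s' j j' hfeat b hadj
    have hlen' : q.length < s' := by simpa [SimpleGraph.Walk.length_cons] using hlen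
    obtain ⟨a', ha'⟩ := ih s' b' hlen' hfeat'
    refine ⟨a', ?_⟩
    have hrec : Y j' - Y b' = Q.transpose.mulVec (X j - X b) := by
      rw [hpos, Matrix.mulVec_mulVec, hQ, Matrix.one_mulVec]
    have : Y a' - Y j' = (Y a' - Y b') - (Y j' - Y b') := by abel
    rw [this, ha', hrec, ← Matrix.mulVec_sub]
    abel


/-- n iterations of a maximally expressive E-GGNN on a connected graph with n nodes
reconstruct the point cloud up to permutation and rigid motion. -/
theorem connected_n_iterations_reconstruct
    {d n : ℕ} (A B : SimpleGraph (Fin n)) (hA : A.Connected) (hB : B.Connected)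
    (X Y : Fin n → Fin d → ℝ)
    (hX : ∀ i j : Fin n, i ≠ j → X i ≠ X j)
    (hY : ∀ i j : Fin n, i ≠ j → Y i ≠ Y j)
    (i k : Fin n) (Q : Matrix (Fin d) (Fin d) ℝ)
    (hQ : Q ∈ Matrix.orthogonalGroup (Fin d) ℝ)
    (h : ewl A X n i = actE Q n (ewl B Y n k)) :
    ∃ σ : Equiv.Perm (Fin n), ∃ Q' : Matrix (Fin d) (Fin d) ℝ,
      Q' ∈ Matrix.orthogonalGroup (Fin d) ℝ ∧ ∃ t : Fin d → ℝ,
      ∀ j, Y (σ j) = Q'.mulVec (X j) + t := by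
  
  classical
  have hstar : star Q = Q.transpose := by
    ext a b; simp [Matrix.star_apply]
  have hQtQ : Q.transpose * Q = 1 := by
    rw [← hstar]; exact (Matrix.mem_orthogonalGroup_iff' _ ℝ).mp hQ
  have hQQt : Q * Q.transpose = 1 := by
    rw [← hstar]; exact (Matrix.mem_orthogonalGroup_iff _ ℝ).mp hQ
  have key : ∀ a : Fin n, ∃ a', Y a' - Y k = Q.transpose.mulVec (X a - X i) := by
    intro a
    obtain ⟨p⟩ := hA.preconnected i a
    have hlen : p.toPath.1.length < n := by
      have := p.toPath.2.length_lt
      simpa using this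
    exact ewl_walk A B X Y Q hQtQ p.toPath.1 n k hlen h
  choose f hf using key
  have hinj : Function.Injective f := by
    intro a b hab
    by_contra hne
    apply hX a b hne
    have h1 := hf a
    have h2 := hf b
    rw [hab] at h1
    have h3 : Q.transpose.mulVec (X a - X i) = Q.transpose.mulVec (X b - X i) := by
      rw [← h1, ← h2]
    have h4 : X a - X i = X b - X i := by
      have := congrArg (fun v => Q.mulVec v) h3
      simpa [Matrix.mulVec_mulVec, hQQt, Matrix.one_mulVec] using this
    have := sub_left_injective h4
    exact this
  refine ⟨Equiv.ofBijective f (Finite.injective_iff_bijective.mp hinj),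
    Q.transpose, ?_, Y k - Q.transpose.mulVec (X i), ?_⟩
  · rw [Matrix.mem_orthogonalGroup_iff]
    have hst : star Q.transpose = Q := by ext a b; simp [Matrix.star_apply]
    rw [Matrix.transpose_transpose]; exact hQtQ
  · intro j
    have := hf j
    simp only [Equiv.ofBijective_apply]
    rw [Matrix.mulVec_sub] at this
    have h5 : Y (f j) = Q.transpose.mulVec (X j) - Q.transpose.mulVec (X i) + Y k := by
      rw [← this]; abel
    rw [h5]; abel
end

section
/- Fix an analytic function σ: ℝ → ℝ that is not a polynomial, and let d, C ≥ 1. Let z_1,…,z_n and ẑ_1,…,ẑ_m be nonzero vectors in ℝ^d with ‖z_1‖ < ‖z_2‖ < … < ‖z_n‖ and ‖ẑ_1‖ < ‖ẑ_2‖ < … < ‖ẑ_m‖, and let v_1,…,v_n and v̂_1,…,v̂_m be matrices in ℝ^{d×C} with columns v_{j,c}, v̂_{j,c} ∈ ℝ^d. Suppose that for every choice of basic analytic networks φ^{(0)},…,φ^{(C)}: ℝ → ℝ one has Σ_{j=1}^n ( φ^{(0)}(‖z_j‖) z_j + Σ_{c=1}^C φ^{(c)}(‖z_j‖) v_{j,c}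 ) = Σ_{j=1}^m ( φ^{(0)}(‖ẑ_j‖) ẑ_j + Σ_{c=1}^C φ^{(c)}(‖ẑ_j‖) v̂_{j,c} ). Then n = m and the multisets of pairs coincide: {{(z_1,v_1),…,(z_n,v_n)}} = {{(ẑ_1,v̂_1),…,(ẑ_m,v̂_m)}} (equivalently, z_j = ẑ_j and v_j = v̂_j for all j). -/
open scoped BigOperators

lemma antideriv_exists (p : Polynomial ℝ) : ∃ q : Polynomial ℝ, q.derivative = p := by
  induction p using Polynomial.induction_on with
  | C a => exact ⟨Polynomial.C a * Polynomial.X, by simp⟩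
  | add p q hp hq =>
    obtain ⟨P, hP⟩ := hp; obtain ⟨Q, hQ⟩ := hq
    exact ⟨P + Q, by simp [hP, hQ]⟩
  | monomial n a _ =>
    refine ⟨Polynomial.C (a / (n + 2)) * Polynomial.X ^ (n + 2), ?_⟩
    rw [Polynomial.derivative_C_mul, Polynomial.derivative_X_pow]
    push_cast
    rw [← mul_assoc, ← Polynomial.C_mul]
    congr 2
    field_simp

lemma poly_of_iteratedDeriv_zero :
    ∀ (k : ℕ) (f : ℝ → ℝ), ContDiff ℝ (⊤ : ℕ∞) f → (∀ x, iteratedDeriv k f x = 0) →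
      ∃ p : Polynomial ℝ, ∀ x, f x = p.eval x := by
  intro k
  induction k with
  | zero =>
    intro f _ h
    exact ⟨0, by simpa using h⟩
  | succ k ih =>
    intro f hf h
    have hdf : ContDiff ℝ (⊤ : ℕ∞) (deriv f) := (contDiff_infty_iff_deriv.mp hf).2
    have h' : ∀ x, iteratedDeriv k (deriv f) x = 0 := by
      intro x
      have := h x
      rwa [iteratedDeriv_succ'] at this
    obtain ⟨p, hp⟩ := ih (deriv f) hdf h'
    obtain ⟨q, hq⟩ := antideriv_exists p
    have hder : ∀ x, deriv (fun y => f y - q.eval y) x = 0 := by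
      intro x
      rw [deriv_fun_sub ((hf.differentiable (by simp)).differentiableAt)
        (q.differentiable.differentiableAt)]
      rw [hp, Polynomial.deriv, hq]
      ring
    have hdiff : Differentiable ℝ (fun y => f y - q.eval y) :=
      (hf.differentiable (by simp)).sub q.differentiable
    have hconst : ∀ x, f x - q.eval x = f 0 - q.eval 0 := by
      intro x
      exact is_const_of_deriv_eq_zero hdiff hder x 0
    refine ⟨q + Polynomial.C (f 0 - q.eval 0), fun x => ?_⟩
    have := hconst x
    simp only [Polynomial.eval_add, Polynomial.eval_C]
    linarith

lemma exists_iteratedDeriv_ne (σ : ℝ → ℝ) (hσ : ContDiff ℝ (⊤ : ℕ∞) σ)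
    (hσp : ¬ ∃ p : Polynomial ℝ, ∀ x : ℝ, σ x = p.eval x) (k : ℕ) :
    ∃ b, iteratedDeriv k σ b ≠ 0 := by
  by_contra hcon
  push_neg at hcon
  exact hσp (poly_of_iteratedDeriv_zero k σ hσ hcon)

lemma iteratedDeriv_sum' {ι : Type*} [Fintype ι] :
    ∀ (k : ℕ) (f : ι → ℝ → ℝ), (∀ i, ContDiff ℝ (⊤ : ℕ∞) (f i)) → ∀ x : ℝ,
      iteratedDeriv k (fun y => ∑ i, f i y) x = ∑ i, iteratedDeriv k (f i) x := by
  intro k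
  induction k with
  | zero => intro f _ x; simp
  | succ k ih =>
    intro f hf x
    rw [iteratedDeriv_succ']
    have hder : deriv (fun y => ∑ i, f i y) = fun y => ∑ i, deriv (f i) y := by
      funext y
      exact deriv_fun_sum (fun i _ => ((hf i).differentiable (by simp)).differentiableAt)
    rw [hder, ih (fun i => deriv (f i)) (fun i => (contDiff_infty_iff_deriv.mp (hf i)).2) x]
    exact Finset.sum_congr rfl fun i _ => congrFun (iteratedDeriv_succ' (n := k) (f := f i)).symm x

lemma iteratedDeriv_cmul :
    ∀ (k : ℕ) (g : ℝ → ℝ), ContDiff ℝ (⊤ : ℕ∞) g → ∀ (c x : ℝ),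
      iteratedDeriv k (fun y => c * g y) x = c * iteratedDeriv k g x := by
  intro k
  induction k with
  | zero => intro g _ c x; simp
  | succ k ih =>
    intro g hg c x
    rw [iteratedDeriv_succ', iteratedDeriv_succ']
    have hder : deriv (fun y => c * g y) = fun y => c * deriv g y := by
      funext y
      exact deriv_const_mul c ((hg.differentiable (by simp)).differentiableAt)
    rw [hder]
    exact ih (deriv g) (contDiff_infty_iff_deriv.mp hg).2 c x

lemma iteratedDeriv_comp_affine (k : ℕ) (f : ℝ → ℝ) (hf : ContDiff ℝ (⊤ : ℕ∞) f)
    (c b x : ℝ) :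
    iteratedDeriv k (fun y => f (c * y + b)) x = c ^ k * iteratedDeriv k f (c * x + b) := by
  have hg : ContDiff ℝ (⊤ : ℕ∞) (fun z => f (z + b)) :=
    hf.comp (contDiff_id.add contDiff_const)
  have h1 : (fun y => f (c * y + b)) = fun y => (fun z => f (z + b)) (c * y) := rfl
  rw [h1, iteratedDeriv_comp_const_mul (hg.of_le (by exact_mod_cast le_top)) c]
  rw [iteratedDeriv_comp_add_const]

lemma iteratedDeriv_const_fun (k : ℕ) (hk : k ≠ 0) (K : ℝ) (x : ℝ) :
    iteratedDeriv k (fun _ : ℝ => K) x = 0 := by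
  obtain ⟨k, rfl⟩ := Nat.exists_eq_succ_of_ne_zero hk
  have : ∀ (j : ℕ) (x : ℝ), iteratedDeriv j (fun _ : ℝ => (0:ℝ)) x = 0 := by
    intro j
    induction j with
    | zero => intro x; simp
    | succ j ih =>
      intro x
      rw [iteratedDeriv_succ']
      have : deriv (fun _ : ℝ => (0:ℝ)) = fun _ => (0:ℝ) := by funext y; simp
      rw [this]
      exact ih x
  rw [iteratedDeriv_succ']
  have hd : deriv (fun _ : ℝ => K) = fun _ : ℝ => (0:ℝ) := by funext y; simp
  rw [hd]
  exact this k x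

lemma moment_vanish {ι : Type*} [Fintype ι] [DecidableEq ι]
    (σ : ℝ → ℝ) (hσ : ContDiff ℝ (⊤ : ℕ∞) σ)
    (hσd : ∀ k : ℕ, ∃ b, iteratedDeriv k σ b ≠ 0)
    (u : ι → ℝ) (hu : ∀ i, 0 < u i) (w : ι → ℝ) (K : ℝ)
    (H : ∀ A B : ℝ, ∑ i, σ (A * u i + B) * w i = K) :
    ∀ r : ℝ, (∑ i, if u i = r then w i else 0) = 0 := by
  classical
  have haff : ∀ (c b : ℝ), ContDiff ℝ (⊤ : ℕ∞) (fun y : ℝ => σ (c * y + b)) :=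
    fun c b => hσ.comp ((contDiff_const.mul contDiff_id).add contDiff_const)
  have step1 : ∀ k : ℕ, k ≠ 0 → ∑ i, w i * u i ^ k = 0 := by
    intro k hk
    obtain ⟨b, hb⟩ := hσd k
    have hterm : ∀ i : ι, ContDiff ℝ (⊤ : ℕ∞) (fun y : ℝ => w i * σ (u i * y + b)) :=
      fun i => contDiff_const.mul (haff (u i) b)
    have hFconst : (fun A : ℝ => ∑ i, w i * σ (u i * A + b)) = fun _ => K := by
      funext A
      rw [← H A b]
      exact Finset.sum_congr rfl fun i _ => by rw [mul_comm (u i) A, mul_comm]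
    have h0 : iteratedDeriv k (fun A : ℝ => ∑ i, w i * σ (u i * A + b)) 0 = 0 := by
      rw [hFconst]; exact iteratedDeriv_const_fun k hk K 0
    rw [iteratedDeriv_sum' k _ hterm 0] at h0
    have hterm2 : ∀ i ∈ Finset.univ, iteratedDeriv k (fun y : ℝ => w i * σ (u i * y + b)) 0
        = w i * u i ^ k * iteratedDeriv k σ b := by
      intro i _
      rw [iteratedDeriv_cmul k _ (haff (u i) b) (w i) 0,
        iteratedDeriv_comp_affine k σ hσ (u i) b 0, mul_zero, zero_add]
      ring
    rw [Finset.sum_congr rfl hterm2] at h0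
    have hfac : (∑ i, w i * u i ^ k) * iteratedDeriv k σ b = 0 := by
      rw [Finset.sum_mul]; exact h0
    rcases mul_eq_zero.mp hfac with h | h
    · exact h
    · exact absurd h hb
  set V : Finset ℝ := Finset.image u Finset.univ with hVdef
  have hEinj : Function.Injective (fun l : Fin V.card => V.orderEmbOfFin rfl l) :=
    fun a b hab => (V.orderEmbOfFin rfl).injective hab
  have hEmem : ∀ l, (V.orderEmbOfFin rfl) l ∈ V := fun l => Finset.orderEmbOfFin_mem V rfl l
  have hE0 : ∀ l, (V.orderEmbOfFin rfl) l ≠ 0 := by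
    intro l
    obtain ⟨i, _, hi⟩ := Finset.mem_image.mp (hEmem l)
    rw [← hi]; exact ne_of_gt (hu i)
  have hcover : ∀ i, ∃ l, (V.orderEmbOfFin rfl) l = u i := by
    intro i
    have h1 : u i ∈ V := Finset.mem_image_of_mem u (Finset.mem_univ i)
    have h2 : u i ∈ Set.range (V.orderEmbOfFin rfl) := by
      rw [Finset.range_orderEmbOfFin]; exact h1
    exact h2
  have key : ∀ k : ℕ, k ≠ 0 →
      ∑ l, (∑ i, if u i = (V.orderEmbOfFin rfl) l then w i else 0)
        * ((V.orderEmbOfFin rfl) l) ^ k = 0 := by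
    intro k hk
    calc ∑ l, (∑ i, if u i = (V.orderEmbOfFin rfl) l then w i else 0)
          * ((V.orderEmbOfFin rfl) l) ^ k
        = ∑ l, ∑ i, (if u i = (V.orderEmbOfFin rfl) l then w i * u i ^ k else 0) := by
          refine Finset.sum_congr rfl fun l _ => ?_
          rw [Finset.sum_mul]
          refine Finset.sum_congr rfl fun i _ => ?_
          by_cases hc : u i = (V.orderEmbOfFin rfl) l
          · rw [if_pos hc, if_pos hc, hc]
          · rw [if_neg hc, if_neg hc, zero_mul]
      _ = ∑ i, ∑ l, (if u i = (V.orderEmbOfFin rfl) l then w i * u i ^ k else 0) :=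
          Finset.sum_comm
      _ = ∑ i, w i * u i ^ k := by
          refine Finset.sum_congr rfl fun i _ => ?_
          obtain ⟨li, hli⟩ := hcover i
          have hcond : ∀ l, (u i = (V.orderEmbOfFin rfl) l) ↔ (l = li) := by
            intro l
            constructor
            · intro hl
              apply hEinj
              show (V.orderEmbOfFin rfl) l = (V.orderEmbOfFin rfl) li
              rw [hli, ← hl]
            · intro hl; rw [hl, hli]
          calc ∑ l, (if u i = (V.orderEmbOfFin rfl) l then w i * u i ^ k else 0)
              = ∑ l, (if l = li then w i * u i ^ k else 0) := by
                refine Finset.sum_congr rfl fun l _ => ?_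
                by_cases hc : l = li
                · rw [if_pos ((hcond l).mpr hc), if_pos hc]
                · rw [if_neg (fun hx => hc ((hcond l).mp hx)), if_neg hc]
            _ = w i * u i ^ k := Fintype.sum_ite_eq' li (fun _ => w i * u i ^ k)
      _ = 0 := step1 k hk
  have hW0 : ∀ l, (∑ i, if u i = (V.orderEmbOfFin rfl) l then w i else 0) = 0 := by
    have hvdm : (fun l => (∑ i, if u i = (V.orderEmbOfFin rfl) l then w i else 0)
        * (V.orderEmbOfFin rfl) l) = 0 := by
      apply Matrix.eq_zero_of_forall_pow_sum_mul_pow_eq_zero hEinj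
      intro j
      have hkey := key ((j : ℕ) + 1) (Nat.succ_ne_zero _)
      calc ∑ l, ((∑ i, if u i = (V.orderEmbOfFin rfl) l then w i else 0)
              * (V.orderEmbOfFin rfl) l) * ((fun l : Fin V.card => (V.orderEmbOfFin rfl) l) l) ^ (j : ℕ)
          = ∑ l, (∑ i, if u i = (V.orderEmbOfFin rfl) l then w i else 0)
              * ((V.orderEmbOfFin rfl) l) ^ ((j : ℕ) + 1) := by
            refine Finset.sum_congr rfl fun l _ => by ring
        _ = 0 := hkey
    intro l
    have hl := congrFun hvdm l
    simp only [Pi.zero_apply] at hl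
    rcases mul_eq_zero.mp hl with h | h
    · exact h
    · exact absurd h (hE0 l)
  intro r
  by_cases hr : r ∈ V
  · have h2 : r ∈ Set.range (V.orderEmbOfFin rfl) := by
      rw [Finset.range_orderEmbOfFin]; exact hr
    obtain ⟨l, hl⟩ := h2
    rw [← hl]
    exact hW0 l
  · apply Finset.sum_eq_zero
    intro i _
    rw [if_neg]
    intro hc
    exact hr (hc ▸ Finset.mem_image_of_mem u (Finset.mem_univ i))

lemma vnorm_pos {d : ℕ} (v : Fin d → ℝ) (hv : v ≠ 0) : 0 < vnorm v := by
  obtain ⟨i, hi⟩ := Function.ne_iff.mp hv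
  apply Real.sqrt_pos.mpr
  apply Finset.sum_pos' (fun i _ => sq_nonneg (v i))
  exact ⟨i, Finset.mem_univ i, pow_pos (abs_pos.mpr hi) 2 |>.trans_le (le_of_eq (sq_abs _))⟩

lemma sum_ite_of_inj {N : ℕ} (τ : Fin N → ℝ) (hτ : Function.Injective τ)
    (f : Fin N → ℝ) (j : Fin N) :
    (∑ j', if τ j' = τ j then f j' else 0) = f j := by
  have : ∀ j', (if τ j' = τ j then f j' else 0) = (if j' = j then f j' else 0) := by
    intro j'
    by_cases hc : j' = j
    · rw [if_pos (hc ▸ rfl), if_pos hc]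
    · rw [if_neg (fun hx => hc (hτ hx)), if_neg hc]
  rw [Finset.sum_congr rfl fun j' _ => this j']
  exact Fintype.sum_ite_eq' j f

/-- Lemma 1 in the proof of Theorem 5.1: separation by basic analytic networks with one
"position" channel and C vector channels determines the multiset of pairs. -/

theorem basic_networks_separate_vector_multisets
    {d C n m : ℕ} (hd : 1 ≤ d) (hC : 1 ≤ C)
    (σ : ℝ → ℝ) (hσa : ∀ x : ℝ, AnalyticAt ℝ σ x)
    (hσp : ¬ ∃ p : Polynomial ℝ, ∀ x : ℝ, σ x = p.eval x)
    (z : Fin n → Fin d → ℝ) (zh : Fin m → Fin d → ℝ)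
    (hz0 : ∀ j, z j ≠ 0) (hzh0 : ∀ j, zh j ≠ 0)
    (hzmono : StrictMono (fun j => vnorm (z j)))
    (hzhmono : StrictMono (fun j => vnorm (zh j)))
    (v : Fin n → Fin C → Fin d → ℝ) (vh : Fin m → Fin C → Fin d → ℝ)
    (h : ∀ (a b : Fin (C+1) → ℝ),
      (∑ j, (σ (a 0 * vnorm (z j) + b 0) • z j
          + ∑ c : Fin C, σ (a c.succ * vnorm (z j) + b c.succ) • v j c))
        = ∑ j, (σ (a 0 * vnorm (zh j) + b 0) • zh j
          + ∑ c : Fin C, σ (a c.succ * vnorm (zh j) + b c.succ) • vh j c)) :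
    n = m ∧
      Finset.univ.val.map (fun j => (z j, v j)) =
        Finset.univ.val.map (fun j => (zh j, vh j)) := by
  classical
  have hσs : ContDiff ℝ (⊤ : ℕ∞) σ := contDiff_iff_contDiffAt.mpr fun x => (hσa x).contDiffAt
  have hσd : ∀ k : ℕ, ∃ b, iteratedDeriv k σ b ≠ 0 := exists_iteratedDeriv_ne σ hσs hσp
  set t : Fin n → ℝ := fun j => vnorm (z j) with htd
  set s : Fin m → ℝ := fun j => vnorm (zh j) with hsd
  have hvt : ∀ j, vnorm (z j) = t j := fun j => rfl
  have hvs : ∀ j, vnorm (zh j) = s j := fun j => rfl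
  simp only [hvt, hvs] at h
  have htpos : ∀ j, 0 < t j := fun j => vnorm_pos _ (hz0 j)
  have hspos : ∀ j, 0 < s j := fun j => vnorm_pos _ (hzh0 j)
  have htinj : Function.Injective t := hzmono.injective
  have hsinj : Function.Injective s := hzhmono.injective
  -- channel 0 extraction
  have key0 : ∀ (i : Fin d) (r : ℝ),
      (∑ j, if t j = r then z j i else 0) = ∑ j, if s j = r then zh j i else 0 := by
    intro i r
    have hcoord : ∀ A B : ℝ,
        (∑ j, σ (A * t j + B) * z j i) + (∑ j, ∑ c : Fin C, σ 0 * v j c i)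
          = (∑ j, σ (A * s j + B) * zh j i) + (∑ j, ∑ c : Fin C, σ 0 * vh j c i) := by
      intro A B
      have h1 := congrFun (h (Fin.cons A (fun _ => 0)) (Fin.cons B (fun _ => 0))) i
      simp only [Fin.cons_zero, Fin.cons_succ, Finset.sum_apply, Pi.add_apply, Pi.smul_apply,
        smul_eq_mul, zero_mul, zero_add] at h1
      rw [Finset.sum_add_distrib, Finset.sum_add_distrib] at h1
      exact h1
    have H : ∀ A B : ℝ,
        ∑ q : Fin n ⊕ Fin m, σ (A * Sum.elim t s q + B)
            * Sum.elim (fun j => z j i) (fun j => -(zh j i)) q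
          = (∑ j, ∑ c : Fin C, σ 0 * vh j c i) - (∑ j, ∑ c : Fin C, σ 0 * v j c i) := by
      intro A B
      rw [Fintype.sum_sum_type]
      simp only [Sum.elim_inl, Sum.elim_inr, mul_neg]
      rw [Finset.sum_neg_distrib]
      have := hcoord A B
      linarith
    have hu : ∀ q : Fin n ⊕ Fin m, 0 < Sum.elim t s q := by
      rintro (j | j)
      · exact htpos j
      · exact hspos j
    have key := moment_vanish σ hσs hσd (Sum.elim t s) hu
      (Sum.elim (fun j => z j i) (fun j => -(zh j i))) _ H r
    rw [Fintype.sum_sum_type] at key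
    simp only [Sum.elim_inl, Sum.elim_inr] at key
    have hneg : ∀ j, (if s j = r then -(zh j i) else 0) = -(if s j = r then zh j i else 0) := by
      intro j; split <;> simp
    have key' : (∑ j, if t j = r then z j i else 0) + ∑ j, (if s j = r then -(zh j i) else 0) = 0 := key
    rw [Finset.sum_congr rfl (fun j _ => hneg j), Finset.sum_neg_distrib] at key'
    linarith
  -- matching of norms
  have hexists : ∀ j : Fin n, ∃ l, s l = t j := by
    intro j
    by_contra hno
    push_neg at hno
    have hz0' : z j = 0 := by
      funext i
      have hk := key0 i (t j)
      rw [sum_ite_of_inj t htinj (fun j' => z j' i) j] at hk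
      rw [hk]
      exact Finset.sum_eq_zero fun l _ => if_neg (hno l)
    exact hz0 j hz0'
  have hexists' : ∀ l : Fin m, ∃ j, t j = s l := by
    intro l
    by_contra hno
    push_neg at hno
    have hzh0' : zh l = 0 := by
      funext i
      have hk := key0 i (s l)
      rw [sum_ite_of_inj s hsinj (fun l' => zh l' i) l] at hk
      rw [← hk]
      exact Finset.sum_eq_zero fun j _ => if_neg (hno j)
    exact hzh0 l hzh0'
  have himg : Finset.image t Finset.univ = Finset.image s Finset.univ := by
    ext r
    simp only [Finset.mem_image, Finset.mem_univ, true_and]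
    constructor
    · rintro ⟨j, rfl⟩
      obtain ⟨l, hl⟩ := hexists j
      exact ⟨l, hl⟩
    · rintro ⟨l, rfl⟩
      obtain ⟨j, hj⟩ := hexists' l
      exact ⟨j, hj⟩
  have hcardt : (Finset.image t Finset.univ).card = n := by
    rw [Finset.card_image_of_injective _ htinj, Finset.card_univ, Fintype.card_fin]
  have hcards : (Finset.image s Finset.univ).card = m := by
    rw [Finset.card_image_of_injective _ hsinj, Finset.card_univ, Fintype.card_fin]
  have hnm : n = m := by rw [← hcardt, himg, hcards]
  subst hnm
  have hts : t = s := by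
    have t_eq : t = (Finset.image t Finset.univ).orderEmbOfFin hcardt :=
      Finset.orderEmbOfFin_unique hcardt
        (fun x => Finset.mem_image_of_mem t (Finset.mem_univ x)) hzmono
    have s_eq : s = (Finset.image t Finset.univ).orderEmbOfFin hcardt :=
      Finset.orderEmbOfFin_unique hcardt
        (fun x => himg ▸ Finset.mem_image_of_mem s (Finset.mem_univ x)) hzhmono
    rw [t_eq, s_eq]
  have hzzh : ∀ j, z j = zh j := by
    intro j
    funext i
    have hk := key0 i (t j)
    rw [sum_ite_of_inj t htinj (fun j' => z j' i) j] at hk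
    have hts' : t j = s j := congrFun hts j
    rw [hts'] at hk
    rw [sum_ite_of_inj s hsinj (fun j' => zh j' i) j] at hk
    exact hk
  -- channel c extraction
  have keyc : ∀ (c : Fin C) (i : Fin d) (r : ℝ),
      (∑ j, if t j = r then v j c i else 0) = ∑ j, if s j = r then vh j c i else 0 := by
    intro c i r
    have hinner : ∀ (A B X : ℝ) (g : Fin C → ℝ),
        (∑ c' : Fin C, σ ((if c' = c then A else 0) * X + (if c' = c then B else 0)) * g c')
          = σ (A * X + B) * g c + ∑ c' ∈ Finset.univ.erase c, σ 0 * g c' := by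
      intro A B X g
      rw [← Finset.add_sum_erase _ _ (Finset.mem_univ c)]
      congr 1
      · rw [if_pos rfl, if_pos rfl]
      · refine Finset.sum_congr rfl fun c' hc' => ?_
        rw [if_neg (Finset.ne_of_mem_erase hc'), if_neg (Finset.ne_of_mem_erase hc'),
          zero_mul, zero_add]
    have hcoord : ∀ A B : ℝ,
        (∑ j, σ (A * t j + B) * v j c i)
          + ((∑ j, σ 0 * z j i) + ∑ j, ∑ c' ∈ Finset.univ.erase c, σ 0 * v j c' i)
          = (∑ j, σ (A * s j + B) * vh j c i)
            + ((∑ j, σ 0 * zh j i) + ∑ j, ∑ c' ∈ Finset.univ.erase c, σ 0 * vh j c' i) := by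
      intro A B
      have h1 := congrFun (h (Fin.cons 0 (fun c' => if c' = c then A else 0))
        (Fin.cons 0 (fun c' => if c' = c then B else 0))) i
      simp only [Fin.cons_zero, Fin.cons_succ, Finset.sum_apply, Pi.add_apply, Pi.smul_apply,
        smul_eq_mul, zero_mul, zero_add] at h1
      have e1 : ∀ j, (∑ c' : Fin C,
          σ ((if c' = c then A else 0) * t j + (if c' = c then B else 0)) * v j c' i)
            = σ (A * t j + B) * v j c i + ∑ c' ∈ Finset.univ.erase c, σ 0 * v j c' i :=
        fun j => hinner A B (t j) (fun c' => v j c' i)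
      have e2 : ∀ j, (∑ c' : Fin C,
          σ ((if c' = c then A else 0) * s j + (if c' = c then B else 0)) * vh j c' i)
            = σ (A * s j + B) * vh j c i + ∑ c' ∈ Finset.univ.erase c, σ 0 * vh j c' i :=
        fun j => hinner A B (s j) (fun c' => vh j c' i)
      simp only [e1, e2] at h1
      rw [Finset.sum_add_distrib, Finset.sum_add_distrib, Finset.sum_add_distrib,
        Finset.sum_add_distrib] at h1
      linarith
    have H : ∀ A B : ℝ,
        ∑ q : Fin n ⊕ Fin n, σ (A * Sum.elim t s q + B)
            * Sum.elim (fun j => v j c i) (fun j => -(vh j c i)) q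
          = ((∑ j, σ 0 * zh j i) + ∑ j, ∑ c' ∈ Finset.univ.erase c, σ 0 * vh j c' i)
            - ((∑ j, σ 0 * z j i) + ∑ j, ∑ c' ∈ Finset.univ.erase c, σ 0 * v j c' i) := by
      intro A B
      rw [Fintype.sum_sum_type]
      simp only [Sum.elim_inl, Sum.elim_inr, mul_neg]
      rw [Finset.sum_neg_distrib]
      have := hcoord A B
      linarith
    have hu : ∀ q : Fin n ⊕ Fin n, 0 < Sum.elim t s q := by
      rintro (j | j)
      · exact htpos j
      · exact hspos j
    have key := moment_vanish σ hσs hσd (Sum.elim t s) hu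
      (Sum.elim (fun j => v j c i) (fun j => -(vh j c i))) _ H r
    rw [Fintype.sum_sum_type] at key
    simp only [Sum.elim_inl, Sum.elim_inr] at key
    have hneg : ∀ j, (if s j = r then -(vh j c i) else 0)
        = -(if s j = r then vh j c i else 0) := by
      intro j; split <;> simp
    have key' : (∑ j, if t j = r then v j c i else 0) + ∑ j, (if s j = r then -(vh j c i) else 0) = 0 := key
    rw [Finset.sum_congr rfl (fun j _ => hneg j), Finset.sum_neg_distrib] at key'
    linarith
  have hvvh : ∀ j c, v j c = vh j c := by
    intro j c
    funext i
    have hk := keyc c i (t j)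
    rw [sum_ite_of_inj t htinj (fun j' => v j' c i) j] at hk
    have hts' : t j = s j := congrFun hts j
    rw [hts'] at hk
    rw [sum_ite_of_inj s hsinj (fun j' => vh j' c i) j] at hk
    exact hk
  refine ⟨rfl, ?_⟩
  have hfun : (fun j : Fin n => (z j, v j)) = fun j => (zh j, vh j) := by
    funext j
    rw [hzzh j, show v j = vh j from funext fun c => hvvh j c]
  rw [hfun]
end

section
/- Let K ⊆ ℝ^{n×n} × ℝ^{n×d} be a compact set of geometric graphs on n vertices and let f^sep: K → ℝ^m be continuous and invariant (i.e. f^sep takes equal values on geometrically isomorphic elements of K). Suppose there exist G₁, G₂ ∈ K that are NOT geometrically isomorphic but satisfy f^sep(G₁) = f^sep(G₂). Then there exist a continuous invariant function f: K → ℝ and ε > 0 such that for EVERY function h: ℝ^m → ℝ one has sup_{G ∈ K} |f(G) − h(f^sep(G))| ≥ ε. (Direction of the approximation–separation theorem: a non-separating invariant cannot be used to uniformly approximate all continuous invariant functions.) -/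
open scoped BigOperators Matrix

/-- The matrix 𝟙 tᵀ ∈ ℝ^{n×d} whose every row is t. -/
def onesCol (n : ℕ) {d : ℕ} (t : Fin d → ℝ) : Matrix (Fin n) (Fin d) ℝ :=
  Matrix.of fun _ j => t j

/-- Geometric isomorphism of geometric graphs represented as matrix pairs:
q is obtained from p by a vertex permutation and a rigid motion. -/
def GeomIsoMat {n d : ℕ}
    (p q : Matrix (Fin n) (Fin n) ℝ × Matrix (Fin n) (Fin d) ℝ) : Prop :=
  ∃ (σ : Equiv.Perm (Fin n)) (Q : Matrix (Fin d) (Fin d) ℝ) (t : Fin d → ℝ),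
    Q ∈ Matrix.orthogonalGroup (Fin d) ℝ ∧
    q.1 = (σ.permMatrix ℝ) * p.1 * (σ.permMatrix ℝ)ᵀ ∧
    q.2 = (σ.permMatrix ℝ) * (p.2 * Q + onesCol n t)

section Aux

open Matrix
open scoped Pointwise

/-! ### Permutation matrix algebra -/

lemma permMatrix_mul_eq {n k : ℕ} (σ : Equiv.Perm (Fin n)) (M : Matrix (Fin n) (Fin k) ℝ) :
    σ.permMatrix ℝ * M = M.submatrix σ id :=
  PEquiv.toMatrix_toPEquiv_mul σ M

lemma permMatrix_transpose {n : ℕ} (σ : Equiv.Perm (Fin n)) :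
    (σ.permMatrix ℝ)ᵀ = (σ⁻¹).permMatrix ℝ := by
  rw [Equiv.Perm.permMatrix, ← PEquiv.toMatrix_symm, ← Equiv.toPEquiv_symm]
  rfl

lemma mul_permMatrix_transpose {n k : ℕ} (σ : Equiv.Perm (Fin n)) (M : Matrix (Fin k) (Fin n) ℝ) :
    M * (σ.permMatrix ℝ)ᵀ = M.submatrix id σ := by
  rw [permMatrix_transpose, Equiv.Perm.permMatrix, PEquiv.mul_toMatrix_toPEquiv]
  rfl

lemma conj_perm {n : ℕ} (σ : Equiv.Perm (Fin n)) (A : Matrix (Fin n) (Fin n) ℝ) :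
    σ.permMatrix ℝ * A * (σ.permMatrix ℝ)ᵀ = A.submatrix σ σ := by
  rw [permMatrix_mul_eq, mul_permMatrix_transpose, Matrix.submatrix_submatrix]
  rfl

lemma permMatrix_mul_onesCol {n d : ℕ} (σ : Equiv.Perm (Fin n)) (t : Fin d → ℝ) :
    σ.permMatrix ℝ * onesCol n t = onesCol n t := by
  rw [permMatrix_mul_eq]; rfl

lemma onesCol_submatrix {n d : ℕ} (σ : Equiv.Perm (Fin n)) (t : Fin d → ℝ) :
    (onesCol n t).submatrix σ id = onesCol n t := rfl

lemma onesCol_mul {n d : ℕ} (t : Fin d → ℝ) (Q : Matrix (Fin d) (Fin d) ℝ) :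
    onesCol n t * Q = onesCol n (t ᵥ* Q) := by
  ext i j
  simp [Matrix.mul_apply, onesCol, Matrix.vecMul, dotProduct]

lemma onesCol_add {n d : ℕ} (a b : Fin d → ℝ) :
    onesCol n a + onesCol n b = onesCol n (a + b) := by
  ext i j; simp [onesCol]

lemma onesCol_zero {n d : ℕ} : onesCol n (0 : Fin d → ℝ) = 0 := by
  ext i j; simp [onesCol]

lemma submatrix_mul_id {n k l m : ℕ} (σ : Fin m → Fin n) (X : Matrix (Fin n) (Fin k) ℝ)
    (Q : Matrix (Fin k) (Fin l) ℝ) :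
    (X * Q).submatrix σ id = X.submatrix σ id * Q := by
  ext i j
  simp [Matrix.mul_apply]

/-- The action of a symmetry on a geometric graph. -/
def act {n d : ℕ} (σ : Equiv.Perm (Fin n)) (Q : Matrix (Fin d) (Fin d) ℝ) (t : Fin d → ℝ)
    (p : Matrix (Fin n) (Fin n) ℝ × Matrix (Fin n) (Fin d) ℝ) :
    Matrix (Fin n) (Fin n) ℝ × Matrix (Fin n) (Fin d) ℝ :=
  (σ.permMatrix ℝ * p.1 * (σ.permMatrix ℝ)ᵀ, σ.permMatrix ℝ * (p.2 * Q + onesCol n t))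

lemma act_eq {n d : ℕ} (σ : Equiv.Perm (Fin n)) (Q : Matrix (Fin d) (Fin d) ℝ) (t : Fin d → ℝ)
    (p : Matrix (Fin n) (Fin n) ℝ × Matrix (Fin n) (Fin d) ℝ) :
    act σ Q t p = (p.1.submatrix σ σ, p.2.submatrix σ id * Q + onesCol n t) := by
  unfold act
  rw [conj_perm, Matrix.mul_add, permMatrix_mul_onesCol, permMatrix_mul_eq, submatrix_mul_id]

lemma geomIso_act {n d : ℕ} (σ : Equiv.Perm (Fin n)) {Q : Matrix (Fin d) (Fin d) ℝ}
    (hQ : Q ∈ Matrix.orthogonalGroup (Fin d) ℝ) (t : Fin d → ℝ)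
    (p : Matrix (Fin n) (Fin n) ℝ × Matrix (Fin n) (Fin d) ℝ) :
    GeomIsoMat p (act σ Q t p) :=
  ⟨σ, Q, t, hQ, rfl, rfl⟩

lemma geomIso_iff_act {n d : ℕ} {p q : Matrix (Fin n) (Fin n) ℝ × Matrix (Fin n) (Fin d) ℝ} :
    GeomIsoMat p q ↔ ∃ (σ : Equiv.Perm (Fin n)) (Q : Matrix (Fin d) (Fin d) ℝ) (t : Fin d → ℝ),
      Q ∈ Matrix.orthogonalGroup (Fin d) ℝ ∧ q = act σ Q t p := by
  constructor
  · rintro ⟨σ, Q, t, hQ, h1, h2⟩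
    exact ⟨σ, Q, t, hQ, Prod.ext h1 h2⟩
  · rintro ⟨σ, Q, t, hQ, rfl⟩
    exact ⟨σ, Q, t, hQ, rfl, rfl⟩

lemma transpose_mem_orth {d : ℕ} {Q : Matrix (Fin d) (Fin d) ℝ}
    (hQ : Q ∈ Matrix.orthogonalGroup (Fin d) ℝ) :
    Qᵀ ∈ Matrix.orthogonalGroup (Fin d) ℝ := by
  have h := Unitary.star_mem hQ
  rwa [Matrix.star_eq_conjTranspose, Matrix.conjTranspose_eq_transpose_of_trivial] at h

lemma mul_transpose_self_orth {d : ℕ} {Q : Matrix (Fin d) (Fin d) ℝ}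
    (hQ : Q ∈ Matrix.orthogonalGroup (Fin d) ℝ) : Q * Qᵀ = 1 := by
  have h := (Matrix.mem_orthogonalGroup_iff (Fin d) ℝ).mp hQ
  exact h

lemma geomIso_symm {n d : ℕ} {p q : Matrix (Fin n) (Fin n) ℝ × Matrix (Fin n) (Fin d) ℝ}
    (h : GeomIsoMat p q) : GeomIsoMat q p := by
  rw [geomIso_iff_act] at h ⊢
  obtain ⟨σ, Q, t, hQ, rfl⟩ := h
  refine ⟨σ⁻¹, Qᵀ, -(t ᵥ* Qᵀ), transpose_mem_orth hQ, ?_⟩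
  rw [act_eq, act_eq]
  apply Prod.ext
  · show p.1 = (p.1.submatrix ⇑σ ⇑σ).submatrix ⇑σ⁻¹ ⇑σ⁻¹
    ext i j
    simp
  · show p.2 = (p.2.submatrix ⇑σ id * Q + onesCol n t).submatrix ⇑σ⁻¹ id * Qᵀ +
      onesCol n (-(t ᵥ* Qᵀ))
    have e1 : (p.2.submatrix ⇑σ id * Q + onesCol n t).submatrix ⇑σ⁻¹ id
        = p.2 * Q + onesCol n t := by
      ext i j
      simp [Matrix.mul_apply, onesCol]
    rw [e1, Matrix.add_mul, Matrix.mul_assoc, mul_transpose_self_orth hQ, Matrix.mul_one,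
      onesCol_mul, add_assoc, onesCol_add, add_neg_cancel, onesCol_zero, add_zero]

lemma geomIso_trans {n d : ℕ} {p q r : Matrix (Fin n) (Fin n) ℝ × Matrix (Fin n) (Fin d) ℝ}
    (h1 : GeomIsoMat p q) (h2 : GeomIsoMat q r) : GeomIsoMat p r := by
  rw [geomIso_iff_act] at h1 h2 ⊢
  obtain ⟨σ, Q, t, hQ, rfl⟩ := h1
  obtain ⟨τ, R, s, hR, rfl⟩ := h2
  refine ⟨σ * τ, Q * R, t ᵥ* R + s, mul_mem hQ hR, ?_⟩
  rw [act_eq, act_eq, act_eq]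
  apply Prod.ext
  · show (p.1.submatrix ⇑σ ⇑σ).submatrix ⇑τ ⇑τ = p.1.submatrix ⇑(σ * τ) ⇑(σ * τ)
    ext i j
    simp [Equiv.Perm.mul_apply]
  · show (p.2.submatrix ⇑σ id * Q + onesCol n t).submatrix ⇑τ id * R + onesCol n s
      = p.2.submatrix ⇑(σ * τ) id * (Q * R) + onesCol n (t ᵥ* R + s)
    have e2 : (p.2.submatrix ⇑σ id * Q + onesCol n t).submatrix ⇑τ id
        = p.2.submatrix ⇑(σ * τ) id * Q + onesCol n t := by
      ext i j
      simp [Matrix.mul_apply, onesCol, Equiv.Perm.mul_apply]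
    rw [e2, Matrix.add_mul, onesCol_mul, add_assoc, onesCol_add, Matrix.mul_assoc]

/-! ### The embedding into a metric space -/

noncomputable def rowsE {n d : ℕ} (X : Matrix (Fin n) (Fin d) ℝ) :
    Fin n → EuclideanSpace ℝ (Fin d) :=
  fun i => (WithLp.equiv 2 (Fin d → ℝ)).symm (X i)

noncomputable def Phi {n d : ℕ} (p : Matrix (Fin n) (Fin n) ℝ × Matrix (Fin n) (Fin d) ℝ) :
    (Fin n → Fin n → ℝ) × (Fin n → EuclideanSpace ℝ (Fin d)) :=
  (fun i j => p.1 i j, rowsE p.2)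

lemma continuous_rowsE {n d : ℕ} : Continuous (rowsE (n := n) (d := d)) :=
  continuous_pi fun i => (PiLp.continuous_toLp 2 (fun _ : Fin d => ℝ)).comp
    (continuous_pi fun j => Continuous.matrix_elem continuous_id i j)

lemma continuous_Phi {n d : ℕ} : Continuous (Phi (n := n) (d := d)) := by
  refine Continuous.prodMk ?_ (continuous_rowsE.comp continuous_snd)
  exact continuous_pi fun i => continuous_pi fun j => Continuous.matrix_elem continuous_fst i j

lemma rowsE_inj {n d : ℕ} : Function.Injective (rowsE (n := n) (d := d)) := by
  intro X Y h
  ext i j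
  have := congrFun h i
  exact congrFun ((WithLp.equiv 2 (Fin d → ℝ)).symm.injective this) j

lemma Phi_inj {n d : ℕ} : Function.Injective (Phi (n := n) (d := d)) := by
  rintro ⟨A, X⟩ ⟨B, Y⟩ h
  obtain ⟨h1, h2⟩ := Prod.ext_iff.mp h
  have hAB : A = B := by ext i j; exact congrFun (congrFun h1 i) j
  have hXY : X = Y := rowsE_inj h2
  rw [hAB, hXY]

lemma rowsE_add {n d : ℕ} (X Y : Matrix (Fin n) (Fin d) ℝ) :
    rowsE (X + Y) = rowsE X + rowsE Y := rfl

/-! ### Isometry of the action -/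

lemma nndist_comp_perm {ι : Type*} [Fintype ι] [DecidableEq ι] {E : Type*} [PseudoMetricSpace E]
    (e : Equiv.Perm ι) (f g : ι → E) :
    nndist (fun i => f (e i)) (fun i => g (e i)) = nndist f g := by
  rw [nndist_pi_def, nndist_pi_def,
    show (Finset.univ.sup fun b => nndist (f b) (g b)) =
      (Finset.univ.image e).sup (fun b => nndist (f b) (g b)) by rw [Finset.image_univ_equiv],
    Finset.sup_image]
  rfl

lemma nndist_double_perm {n : ℕ} (e : Equiv.Perm (Fin n)) (A B : Fin n → Fin n → ℝ) :
    nndist (fun i j => A (e i) (e j)) (fun i j => B (e i) (e j)) = nndist A B := by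
  have h1 : nndist (fun i => (fun i' => A i' ∘ e) (e i)) (fun i => (fun i' => B i' ∘ e) (e i))
      = nndist (fun i' => A i' ∘ e) (fun i' => B i' ∘ e) :=
    nndist_comp_perm e (fun i' => A i' ∘ e) (fun i' => B i' ∘ e)
  have h2 : nndist (fun i' => A i' ∘ e) (fun i' => B i' ∘ e) = nndist A B := by
    rw [nndist_pi_def, nndist_pi_def]
    refine Finset.sup_congr rfl fun i _ => ?_
    exact nndist_comp_perm e (A i) (B i)
  exact h1.trans h2

lemma sum_sq_vecMul {d : ℕ} {Q : Matrix (Fin d) (Fin d) ℝ}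
    (hQ : Q ∈ Matrix.orthogonalGroup (Fin d) ℝ) (w : Fin d → ℝ) :
    ∑ j, (w ᵥ* Q) j ^ 2 = ∑ j, w j ^ 2 := by
  have hQQ : Q * Qᵀ = 1 := mul_transpose_self_orth hQ
  have key : (w ᵥ* Q) ⬝ᵥ (w ᵥ* Q) = w ⬝ᵥ w := by
    calc (w ᵥ* Q) ⬝ᵥ (w ᵥ* Q)
        = (Qᵀ *ᵥ w) ⬝ᵥ (Qᵀ *ᵥ w) := by rw [Matrix.mulVec_transpose]
      _ = ((Qᵀ *ᵥ w) ᵥ* Qᵀ) ⬝ᵥ w := Matrix.dotProduct_mulVec _ _ _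
      _ = ((Q * Qᵀ) *ᵥ w) ⬝ᵥ w := by rw [Matrix.vecMul_transpose, Matrix.mulVec_mulVec]
      _ = w ⬝ᵥ w := by rw [hQQ, Matrix.one_mulVec]
  simpa [dotProduct, pow_two] using key

lemma dist_eRow {d : ℕ} {Q : Matrix (Fin d) (Fin d) ℝ}
    (hQ : Q ∈ Matrix.orthogonalGroup (Fin d) ℝ) (t : Fin d → ℝ) (u v : Fin d → ℝ) :
    dist ((WithLp.equiv 2 (Fin d → ℝ)).symm (u ᵥ* Q + t))
      ((WithLp.equiv 2 (Fin d → ℝ)).symm (v ᵥ* Q + t)) =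
    dist ((WithLp.equiv 2 (Fin d → ℝ)).symm u) ((WithLp.equiv 2 (Fin d → ℝ)).symm v) := by
  have h2 : ∀ i, (u ᵥ* Q + t) i - (v ᵥ* Q + t) i = ((u - v) ᵥ* Q) i := by
    intro i
    simp [Matrix.sub_vecMul]
  simp only [EuclideanSpace.dist_eq, WithLp.equiv_symm_apply, PiLp.toLp_apply, Real.dist_eq, sq_abs]
  congr 1
  simp_rw [h2]
  have := sum_sq_vecMul hQ (u - v)
  simpa [Pi.sub_apply] using this

lemma nndist_rows_act {n d : ℕ} (σ : Equiv.Perm (Fin n)) {Q : Matrix (Fin d) (Fin d) ℝ}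
    (hQ : Q ∈ Matrix.orthogonalGroup (Fin d) ℝ) (t : Fin d → ℝ)
    (X Y : Matrix (Fin n) (Fin d) ℝ) :
    nndist (rowsE (X.submatrix σ id * Q + onesCol n t))
      (rowsE (Y.submatrix σ id * Q + onesCol n t)) = nndist (rowsE X) (rowsE Y) := by
  have hrw : ∀ Z : Matrix (Fin n) (Fin d) ℝ,
      rowsE (Z.submatrix σ id * Q + onesCol n t) =
        fun i => (WithLp.equiv 2 (Fin d → ℝ)).symm (Z (σ i) ᵥ* Q + t) := by
    intro Z
    funext i
    congr 1
  rw [hrw X, hrw Y]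
  have h1 : nndist (fun i => (WithLp.equiv 2 (Fin d → ℝ)).symm (X (σ i) ᵥ* Q + t))
      (fun i => (WithLp.equiv 2 (Fin d → ℝ)).symm (Y (σ i) ᵥ* Q + t)) =
      nndist (fun i => (WithLp.equiv 2 (Fin d → ℝ)).symm (X i ᵥ* Q + t))
      (fun i => (WithLp.equiv 2 (Fin d → ℝ)).symm (Y i ᵥ* Q + t)) :=
    nndist_comp_perm σ (fun i => (WithLp.equiv 2 (Fin d → ℝ)).symm (X i ᵥ* Q + t))
      (fun i => (WithLp.equiv 2 (Fin d → ℝ)).symm (Y i ᵥ* Q + t))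
  rw [h1, nndist_pi_def, nndist_pi_def]
  refine Finset.sup_congr rfl fun i _ => ?_
  have := dist_eRow hQ t (X i) (Y i)
  rw [dist_nndist, dist_nndist] at this
  exact_mod_cast this

lemma dist_Phi_act {n d : ℕ} (σ : Equiv.Perm (Fin n)) {Q : Matrix (Fin d) (Fin d) ℝ}
    (hQ : Q ∈ Matrix.orthogonalGroup (Fin d) ℝ) (t : Fin d → ℝ)
    (a b : Matrix (Fin n) (Fin n) ℝ × Matrix (Fin n) (Fin d) ℝ) :
    dist (Phi (act σ Q t a)) (Phi (act σ Q t b)) = dist (Phi a) (Phi b) := by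
  rw [Prod.dist_eq, Prod.dist_eq]
  congr 1
  · -- first components
    rw [act_eq, act_eq]
    show dist (fun i j => a.1.submatrix σ σ i j) (fun i j => b.1.submatrix σ σ i j) = _
    rw [dist_nndist, dist_nndist]
    exact congrArg _ (nndist_double_perm σ (fun i j => a.1 i j) (fun i j => b.1 i j))
  · -- second components
    rw [act_eq, act_eq]
    show dist (rowsE (a.2.submatrix σ id * Q + onesCol n t))
      (rowsE (b.2.submatrix σ id * Q + onesCol n t)) = _
    rw [dist_nndist, dist_nndist]
    exact congrArg _ (nndist_rows_act σ hQ t a.2 b.2)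

/-! ### Compactness of the orthogonal group and closedness of orbits -/

def matHomeo (k l : ℕ) : Matrix (Fin k) (Fin l) ℝ ≃ₜ (Fin k → Fin l → ℝ) where
  toEquiv := Equiv.refl _
  continuous_toFun := continuous_pi fun i => continuous_pi fun j =>
    Continuous.matrix_elem continuous_id i j
  continuous_invFun := continuous_matrix fun i j => continuous_apply_apply i j

set_option maxHeartbeats 1000000 in
lemma isClosed_orth (d : ℕ) :
    IsClosed ((Matrix.orthogonalGroup (Fin d) ℝ : Set (Matrix (Fin d) (Fin d) ℝ))) := by
  have heq : (Matrix.orthogonalGroup (Fin d) ℝ : Set (Matrix (Fin d) (Fin d) ℝ)) =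
      (fun Q : Matrix (Fin d) (Fin d) ℝ => (star Q * Q, Q * star Q)) ⁻¹'
        {((1 : Matrix (Fin d) (Fin d) ℝ), (1 : Matrix (Fin d) (Fin d) ℝ))} := by
    ext Q
    simp [Unitary.mem_iff, Prod.ext_iff]
  have hcont : Continuous (fun Q : Matrix (Fin d) (Fin d) ℝ => (star Q * Q, Q * star Q)) := by
    apply Continuous.prodMk
    · exact Continuous.matrix_mul continuous_star continuous_id
    · exact Continuous.matrix_mul continuous_id continuous_star
  rw [heq]
  exact isClosed_singleton.preimage hcont

lemma isCompact_orth (d : ℕ) :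
    IsCompact ((Matrix.orthogonalGroup (Fin d) ℝ : Set (Matrix (Fin d) (Fin d) ℝ))) := by
  have hbd : ∀ Q ∈ (Matrix.orthogonalGroup (Fin d) ℝ : Set (Matrix (Fin d) (Fin d) ℝ)),
      ∀ i j, |Q i j| ≤ 1 := by
    intro Q hQ i j
    have h1 : Qᵀ * Q = 1 := by
      have h := (Matrix.mem_orthogonalGroup_iff' (Fin d) ℝ).mp hQ
      exact h
    have hdiag : ∑ k, Q k j ^ 2 = 1 := by
      have := congrFun (congrFun h1 j) j
      simp only [Matrix.mul_apply, Matrix.transpose_apply, Matrix.one_apply_eq] at this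
      rw [← this]
      exact Finset.sum_congr rfl fun k _ => (pow_two _).trans rfl
    have hle : Q i j ^ 2 ≤ 1 := by
      rw [← hdiag]
      exact Finset.single_le_sum (f := fun k => Q k j ^ 2) (fun k _ => sq_nonneg _)
        (Finset.mem_univ i)
    rwa [abs_le_one_iff_mul_self_le_one, ← pow_two]
  -- transfer to the pi type
  set O' : Set (Fin d → Fin d → ℝ) :=
    (matHomeo d d).symm ⁻¹' (Matrix.orthogonalGroup (Fin d) ℝ : Set (Matrix (Fin d) (Fin d) ℝ))
  have hO'c : IsClosed O' := (isClosed_orth d).preimage (matHomeo d d).symm.continuous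
  have hO'b : O' ⊆ Metric.closedBall 0 1 := by
    intro F hF
    rw [Metric.mem_closedBall]
    refine dist_pi_le_iff zero_le_one |>.mpr fun i => ?_
    refine dist_pi_le_iff zero_le_one |>.mpr fun j => ?_
    have := hbd _ hF i j
    simpa [Real.dist_eq] using this
  have hO'k : IsCompact O' :=
    (isCompact_closedBall (0 : Fin d → Fin d → ℝ) 1).of_isClosed_subset hO'c hO'b
  have himg : (Matrix.orthogonalGroup (Fin d) ℝ : Set (Matrix (Fin d) (Fin d) ℝ)) =
      (matHomeo d d).symm '' O' := by
    rw [Homeomorph.image_preimage]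
  rw [himg]
  exact hO'k.image (matHomeo d d).symm.continuous

/-- The linear map `t ↦ rowsE (onesCol n t)`. -/
noncomputable def onesRowsL (n d : ℕ) : (Fin d → ℝ) →ₗ[ℝ] (Fin n → EuclideanSpace ℝ (Fin d)) where
  toFun t := rowsE (onesCol n t)
  map_add' _ _ := rfl
  map_smul' _ _ := rfl

lemma isClosed_PhiOrbit {n d : ℕ} (G : Matrix (Fin n) (Fin n) ℝ × Matrix (Fin n) (Fin d) ℝ) :
    IsClosed (Phi '' {q | GeomIsoMat G q}) := by
  classical
  set O : Set (Matrix (Fin d) (Fin d) ℝ) :=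
    (Matrix.orthogonalGroup (Fin d) ℝ : Set (Matrix (Fin d) (Fin d) ℝ))
  set Tset : Set (Fin n → EuclideanSpace ℝ (Fin d)) := Set.range (fun t => rowsE (onesCol n t))
  have hTset : IsClosed Tset := by
    have : Tset = ↑(LinearMap.range (onesRowsL n d)) := by
      ext y
      simp [Tset, onesRowsL, LinearMap.mem_range]
      exact Iff.rfl
    rw [this]
    exact Submodule.closed_of_finiteDimensional _
  have hdecomp : Phi '' {q | GeomIsoMat G q} =
      ⋃ σ : Equiv.Perm (Fin n),
        ({(fun i j => G.1 (σ i) (σ j) : Fin n → Fin n → ℝ)} ×ˢ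
          (((fun Q => rowsE (G.2.submatrix σ id * Q)) '' O) + Tset)) := by
    ext y
    simp only [Set.mem_image, Set.mem_iUnion, Set.mem_prod, Set.mem_singleton_iff, Set.mem_setOf_eq]
    constructor
    · rintro ⟨q, hq, rfl⟩
      rw [geomIso_iff_act] at hq
      obtain ⟨σ, Q, t, hQ, rfl⟩ := hq
      refine ⟨σ, ?_, ?_⟩
      · rw [act_eq]; rfl
      · rw [act_eq]
        show rowsE (G.2.submatrix σ id * Q + onesCol n t) ∈ _
        rw [rowsE_add]
        exact Set.add_mem_add ⟨Q, hQ, rfl⟩ ⟨t, rfl⟩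
    · rintro ⟨σ, h1, h2⟩
      rw [Set.mem_add] at h2
      obtain ⟨u, hu, v, hv, hy2⟩ := h2
      obtain ⟨Q, hQ, rfl⟩ := hu
      obtain ⟨t, rfl⟩ := hv
      refine ⟨act σ Q t G, (geomIso_iff_act).mpr ⟨σ, Q, t, hQ, rfl⟩, ?_⟩
      rw [act_eq]
      apply Prod.ext
      · exact h1.symm
      · show rowsE (G.2.submatrix σ id * Q + onesCol n t) = y.2
        rw [rowsE_add, hy2]
  rw [hdecomp]
  apply isClosed_iUnion_of_finite
  intro σ
  apply IsClosed.prod isClosed_singleton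
  apply IsClosed.add_left_of_isCompact hTset
  exact (isCompact_orth d).image (continuous_rowsE.comp
    (continuous_const.matrix_mul continuous_id))

end Aux

/-- Direction of the approximation–separation theorem: a non-separating continuous
invariant cannot be used to uniformly approximate all continuous invariant functions. -/
theorem nonseparating_invariant_cannot_approximate
    {n d m : ℕ}
    (K : Set (Matrix (Fin n) (Fin n) ℝ × Matrix (Fin n) (Fin d) ℝ)) (hK : IsCompact K)
    (fsep : Matrix (Fin n) (Fin n) ℝ × Matrix (Fin n) (Fin d) ℝ → (Fin m → ℝ))
    (hc : ContinuousOn fsep K)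
    (hinv : ∀ p ∈ K, ∀ q ∈ K, GeomIsoMat p q → fsep p = fsep q)
    (G₁ : Matrix (Fin n) (Fin n) ℝ × Matrix (Fin n) (Fin d) ℝ) (hG₁ : G₁ ∈ K)
    (G₂ : Matrix (Fin n) (Fin n) ℝ × Matrix (Fin n) (Fin d) ℝ) (hG₂ : G₂ ∈ K)
    (hniso : ¬ GeomIsoMat G₁ G₂) (heq : fsep G₁ = fsep G₂) :
    ∃ f : Matrix (Fin n) (Fin n) ℝ × Matrix (Fin n) (Fin d) ℝ → ℝ,
      ContinuousOn f K ∧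
      (∀ p ∈ K, ∀ q ∈ K, GeomIsoMat p q → f p = f q) ∧
      ∃ ε > (0 : ℝ), ∀ h : (Fin m → ℝ) → ℝ, ∃ G ∈ K, ε ≤ |f G - h (fsep G)| := by
  classical
  set S : Set (Matrix (Fin n) (Fin n) ℝ × Matrix (Fin n) (Fin d) ℝ) := {q | GeomIsoMat G₁ q}
    with hS
  set T := Phi '' S with hT
  set f : Matrix (Fin n) (Fin n) ℝ × Matrix (Fin n) (Fin d) ℝ → ℝ :=
    fun p => Metric.infDist (Phi p) T with hf
  have hG₁S : G₁ ∈ S := by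
    show GeomIsoMat G₁ G₁
    have := geomIso_act 1 (one_mem (Matrix.orthogonalGroup (Fin d) ℝ)) 0 G₁
    have h1 : act 1 (1 : Matrix (Fin d) (Fin d) ℝ) (0 : Fin d → ℝ) G₁ = G₁ := by
      rw [act_eq]
      apply Prod.ext
      · show G₁.1.submatrix _ _ = G₁.1
        have : (⇑(1 : Equiv.Perm (Fin n)) : Fin n → Fin n) = id := rfl
        rw [this, Matrix.submatrix_id_id]
      · show G₁.2.submatrix _ id * 1 + onesCol n 0 = G₁.2
        have : (⇑(1 : Equiv.Perm (Fin n)) : Fin n → Fin n) = id := rfl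
        rw [this, onesCol_zero, Matrix.mul_one, add_zero]
        exact Matrix.submatrix_id_id G₁.2
    rwa [h1] at this
  have hTne : T.Nonempty := ⟨Phi G₁, G₁, hG₁S, rfl⟩
  -- monotonicity of infDist along the relation
  have mono : ∀ a b, GeomIsoMat a b → f b ≤ f a := by
    intro a b hab
    rw [geomIso_iff_act] at hab
    obtain ⟨σ, Q, t, hQ, rfl⟩ := hab
    show Metric.infDist (Phi (act σ Q t a)) T ≤ Metric.infDist (Phi a) T
    haveI : Nonempty ↑T := hTne.to_subtype
    rw [show Metric.infDist (Phi a) T = ⨅ y : T, dist (Phi a) y from Metric.infDist_eq_iInf]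
    apply le_ciInf
    rintro ⟨y, hy⟩
    obtain ⟨s, hs, rfl⟩ := hy
    have hs' : act σ Q t s ∈ S := geomIso_trans hs (geomIso_act σ hQ t s)
    calc Metric.infDist (Phi (act σ Q t a)) T ≤ dist (Phi (act σ Q t a)) (Phi (act σ Q t s)) :=
          Metric.infDist_le_dist_of_mem ⟨_, hs', rfl⟩
      _ = dist (Phi a) (Phi s) := dist_Phi_act σ hQ t a s
  have finv : ∀ p q, GeomIsoMat p q → f p = f q := fun p q hpq =>
    le_antisymm (mono q p (geomIso_symm hpq)) (mono p q hpq)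
  -- positivity
  have hclosed : IsClosed T := isClosed_PhiOrbit G₁
  have hnotmem : Phi G₂ ∉ T := by
    rintro ⟨s, hs, hPhi⟩
    exact hniso (Phi_inj hPhi ▸ hs)
  have hcpos : 0 < Metric.infDist (Phi G₂) T :=
    (hclosed.notMem_iff_infDist_pos hTne).mp hnotmem
  set c := Metric.infDist (Phi G₂) T with hcdef
  refine ⟨f, ?_, fun p _ q _ hpq => finv p q hpq, c / 2, half_pos hcpos, ?_⟩
  · exact ((Metric.continuous_infDist_pt T).comp continuous_Phi).continuousOn
  · intro h
    by_cases hcase : c / 2 ≤ |f G₁ - h (fsep G₁)|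
    · exact ⟨G₁, hG₁, hcase⟩
    · refine ⟨G₂, hG₂, ?_⟩
      push_neg at hcase
      have hf1 : f G₁ = 0 := Metric.infDist_zero_of_mem ⟨G₁, hG₁S, rfl⟩
      have hf2 : f G₂ = c := rfl
      rw [hf1] at hcase
      rw [hf2, ← heq]
      have habs : |h (fsep G₁)| < c / 2 := by
        simpa using hcase
      have h3 := abs_sub_abs_le_abs_sub c (h (fsep G₁))
      have h4 : |c| = c := abs_of_pos hcpos
      linarith
end

section
/- Let K ⊆ ℝ^{n×n} × ℝ^{n×d} be a compact set of geometric graphs on n vertices and let f^sep: K → ℝ^m be continuous, invariant, and injective up to symmetry (i.e. f^sep(G) = f^sep(G') for G, G' ∈ K implies G and G' are geometrically isomorphic). Then every continuous invariant function f: K → ℝ^M can be uniformly approximated by compositions with f^sep: for every ε > 0 there exists a continuous function h: ℝ^m → ℝ^M such that sup_{G ∈ K} ‖f(G) − h(f^sep(G))‖ < ε. (Direction of the approximation–separation theorem: a separating continuous invariant suffices for uniform approximation of all continuous invariant functions.) -/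
open scoped BigOperators Matrix

/-- Direction of the approximation–separation theorem: a separating continuous invariant
suffices for uniform approximation of all continuous invariant functions. -/
theorem separating_invariant_suffices_for_approximation
    {n d m M : ℕ}
    (K : Set (Matrix (Fin n) (Fin n) ℝ × Matrix (Fin n) (Fin d) ℝ)) (hK : IsCompact K)
    (fsep : Matrix (Fin n) (Fin n) ℝ × Matrix (Fin n) (Fin d) ℝ → (Fin m → ℝ))
    (hc : ContinuousOn fsep K)
    (hinv : ∀ p ∈ K, ∀ q ∈ K, GeomIsoMat p q → fsep p = fsep q)
    (hinj : ∀ p ∈ K, ∀ q ∈ K, fsep p = fsep q → GeomIsoMat p q)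
    (f : Matrix (Fin n) (Fin n) ℝ × Matrix (Fin n) (Fin d) ℝ → (Fin M → ℝ))
    (hf : ContinuousOn f K)
    (hfinv : ∀ p ∈ K, ∀ q ∈ K, GeomIsoMat p q → f p = f q)
    (ε : ℝ) (hε : 0 < ε) :
    ∃ h : (Fin m → ℝ) → (Fin M → ℝ), Continuous h ∧
      ∀ p ∈ K, ‖f p - h (fsep p)‖ < ε := by
  classical
  set S : Set (Fin m → ℝ) := fsep '' K with hS
  have hScomp : IsCompact S := hK.image_of_continuousOn hc
  have hSclosed : IsClosed S := hScomp.isClosed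
  have hex : ∀ y : S, ∃ p, p ∈ K ∧ fsep p = (y : Fin m → ℝ) := fun y => y.2
  -- define g on S
  set g : S → (Fin M → ℝ) := fun y => f (hex y).choose with hg
  have hgval : ∀ p (hp : p ∈ K), g ⟨fsep p, ⟨p, hp, rfl⟩⟩ = f p := by
    intro p hp
    have h1 := (hex ⟨fsep p, ⟨p, hp, rfl⟩⟩).choose_spec
    exact hfinv _ h1.1 _ hp (hinj _ h1.1 _ hp h1.2)
  -- the map φ : K → S
  set φ : K → S := fun p => ⟨fsep p.1, ⟨p.1, p.2, rfl⟩⟩ with hφ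
  have hφc : Continuous φ := by
    apply Continuous.subtype_mk
    exact hc.restrict
  have hφsurj : Function.Surjective φ := by
    rintro ⟨y, p, hp, rfl⟩
    exact ⟨⟨p, hp⟩, rfl⟩
  haveI : CompactSpace K := isCompact_iff_compactSpace.mp hK
  have hquot : Topology.IsQuotientMap φ := (hφc.isClosedMap).isQuotientMap hφc hφsurj
  have hgφ : g ∘ φ = fun p : K => f p.1 := by
    funext p
    exact hgval p.1 p.2
  have hgc : Continuous g := by
    rw [hquot.continuous_iff, hgφ]
    exact hf.restrict
  obtain ⟨h, hh⟩ := (⟨g, hgc⟩ : C(S, Fin M → ℝ)).exists_restrict_eq hSclosed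
  refine ⟨h, h.continuous, fun p hp => ?_⟩
  have : h (fsep p) = f p := by
    have h2 := DFunLike.congr_fun hh (⟨fsep p, ⟨p, hp, rfl⟩⟩ : S)
    simpa [ContinuousMap.restrict_apply, hgval p hp] using h2
  simpa [this, sub_self] using hε
end
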